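/- arXiv:2502.13900 — 10 statements merged into one kernel-verified Lean document; each statement's English description precedes it below -/
import Mathlib

section
/- For all real z ≥ 0 and ω ≥ 0, the sigmoid function σ(x) = e^x/(1+e^x) satisfies σ(z − ω) ≤ 2(z² + e^{−ω}). -/
/-!
Below the threshold `z ≤ 2/3 < log 2` the crude bound `σ x ≤ eˣ` gives
`σ (z - ω) ≤ e^z e^{-ω} ≤ 2 e^{-ω}`. Above it, monotonicity gives `σ (z - ω) ≤ σ z`, and
`σ z ≤ 2 z²` follows from `σ z ≤ 1` once `z ≥ 1`, and from `e^{-z} ≥ 1 - z` on `[2/3, 1]`.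
-/

noncomputable def sigmoid (x : ℝ) : ℝ := Real.exp x / (1 + Real.exp x)

lemma sigmoid_eq_real_sigmoid (x : ℝ) : sigmoid x = Real.sigmoid x := by
  have hx := Real.exp_pos x
  rw [sigmoid, Real.sigmoid_def, Real.exp_neg]
  field_simp
  ring

namespace Real

lemma sigmoid_le_exp (x : ℝ) : sigmoid x ≤ exp x := by
  have h : sigmoid x * exp (-x) ≤ 1 := sigmoid_mul_rexp_neg x ▸ sigmoid_le_one (-x)
  rwa [exp_neg, ← div_eq_mul_inv, div_le_one (exp_pos x)] at h

lemma sigmoid_le_inv_two_sub {x : ℝ} (hx : x < 2) : sigmoid x ≤ (2 - x)⁻¹ := by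
  rw [sigmoid_def]
  gcongr
  linarith [add_one_le_exp (-x)]

lemma sigmoid_le_two_mul_sq {x : ℝ} (hx : 2 / 3 ≤ x) : sigmoid x ≤ 2 * x ^ 2 := by
  rcases le_or_gt 1 x with hx1 | hx1
  · nlinarith [sigmoid_le_one x]
  · calc sigmoid x ≤ (2 - x)⁻¹ := sigmoid_le_inv_two_sub (by linarith)
      _ ≤ 2 * x ^ 2 := by
        rw [inv_le_iff_one_le_mul₀ (by linarith)]
        nlinarith [mul_nonneg (sub_nonneg.2 hx) (sub_nonneg.2 hx)]

lemma exp_le_two {x : ℝ} (hx : x ≤ 2 / 3) : exp x ≤ 2 := by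
  rw [← le_log_iff_exp_le two_pos]
  linarith [log_two_gt_d9]

end Real

theorem sigmoid_le_two_mul_sq_add_exp_neg_general (z ω : ℝ) (hω : 0 ≤ ω) :
    sigmoid (z - ω) ≤ 2 * (z ^ 2 + Real.exp (-ω)) := by
  rw [sigmoid_eq_real_sigmoid]
  have hexp := Real.exp_pos (-ω)
  rcases le_or_gt z (2 / 3) with hz | hz
  · calc Real.sigmoid (z - ω) ≤ Real.exp z * Real.exp (-ω) := by
          rw [← Real.exp_add, ← sub_eq_add_neg]; exact Real.sigmoid_le_exp _
      _ ≤ 2 * Real.exp (-ω) := by gcongr; exact Real.exp_le_two hz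
      _ ≤ 2 * (z ^ 2 + Real.exp (-ω)) := by nlinarith [sq_nonneg z]
  · calc Real.sigmoid (z - ω) ≤ Real.sigmoid z := Real.sigmoid_le (by linarith)
      _ ≤ 2 * z ^ 2 := Real.sigmoid_le_two_mul_sq hz.le
      _ ≤ 2 * (z ^ 2 + Real.exp (-ω)) := by linarith

theorem sigmoid_le_two_mul_sq_add_exp_neg (z ω : ℝ) (hz : 0 ≤ z) (hω : 0 ≤ ω) :
    sigmoid (z - ω) ≤ 2 * (z ^ 2 + Real.exp (-ω)) :=
  sigmoid_le_two_mul_sq_add_exp_neg_general z ω hω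
end

section
/- For all real z ≥ 0 and ω ≥ 0, σ(z − ω) ≤ (z + e^{−ω/2})². -/
lemma sigmoid_le_one (x : ℝ) : sigmoid x ≤ 1 :=
  div_le_one_of_le₀ (by linarith) (by positivity)

lemma sigmoid_le_exp (x : ℝ) : sigmoid x ≤ Real.exp x :=
  div_le_self (Real.exp_pos x).le (by linarith [Real.exp_pos x])

lemma Real.exp_mul_one_sub_le_one (z : ℝ) : Real.exp z * (1 - z) ≤ 1 := by
  calc Real.exp z * (1 - z) ≤ Real.exp z * Real.exp (-z) := by
        gcongr; exact Real.one_sub_le_exp_neg z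
    _ = 1 := by rw [← Real.exp_add, add_neg_cancel, Real.exp_zero]

lemma sq_le_one_sub_mul_add_sq {z a : ℝ} (hz : 0 ≤ z) (ha : 0 ≤ a) (h : z + a ≤ 1) :
    a ^ 2 ≤ (1 - z) * (z + a) ^ 2 := by
  have hsq : (z + a) ^ 2 ≤ z + a := by nlinarith
  -- `(1 - z)(z + a)² - a² = z (z + 2a - (z + a)²) ≥ z a`
  nlinarith [mul_nonneg hz ha, mul_le_mul_of_nonneg_left hsq hz]

theorem sigmoid_le_sq_add_exp_neg_half_general (z ω : ℝ) (hz : 0 ≤ z) :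
    sigmoid (z - ω) ≤ (z + Real.exp (-(ω / 2))) ^ 2 := by
  set a := Real.exp (-(ω / 2))
  have ha : 0 < a := Real.exp_pos _
  rcases le_or_gt 1 (z + a) with hge | hlt
  · exact (sigmoid_le_one _).trans (one_le_pow₀ hge)
  have hexp : Real.exp (z - ω) = Real.exp z * a ^ 2 := by
    rw [← Real.exp_nat_mul, ← Real.exp_add]; ring_nf
  calc sigmoid (z - ω) ≤ Real.exp (z - ω) := sigmoid_le_exp _
    _ = Real.exp z * a ^ 2 := hexp
    _ ≤ Real.exp z * ((1 - z) * (z + a) ^ 2) := by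
        gcongr; exact sq_le_one_sub_mul_add_sq hz ha.le hlt.le
    _ = Real.exp z * (1 - z) * (z + a) ^ 2 := by ring
    _ ≤ (z + a) ^ 2 := mul_le_of_le_one_left (by positivity) (Real.exp_mul_one_sub_le_one z)

theorem sigmoid_le_sq_add_exp_neg_half (z ω : ℝ) (hz : 0 ≤ z) (hω : 0 ≤ ω) :
    sigmoid (z - ω) ≤ (z + Real.exp (-(ω / 2))) ^ 2 :=
  sigmoid_le_sq_add_exp_neg_half_general z ω hz
end

section
/- Let {X_k} be a sequence of nonnegative random variables adapted to a filtration {F_k}, with 0 ≤ X_k ≤ X_max almost surely. Then with probability at least 1 − δ, for all K ≥ 1 simultaneously, ∑_{k=1}^K E[X_k | F_{k−1}] ≤ 2∑_{k=1}^K X_k + 4 X_max log(2K/δ). -/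
/-!
With `Y k = E[X k | ℱ (k - 1)]`, the process `W = compensatedExp μ ℱ X Xmax`,
`W K = exp ((∑_{k ≤ K} (Y k / 2 - X k)) / Xmax)` is a positive supermartingale with `W 0 = 1`:
on `[0, 1]` we have `e^{-x} ≤ 1 - x / 2 ≤ e^{-x/2}`, and applying this conditionally gives
`E[e^{-X k / Xmax} | ℱ (k - 1)] ≤ e^{-Y k / (2 Xmax)}`. The inequality at time `K` fails only if
`W K ≥ (2K/δ)²`, which by Markov's inequality has probability at most `δ² / (4K²)`; a union bound
over `K` costs `δ² π² / 24 ≤ δ`.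
-/

open MeasureTheory Finset Real

lemma Real.exp_neg_le_one_sub_half {x : ℝ} (h0 : 0 ≤ x) (h1 : x ≤ 1) :
    exp (-x) ≤ 1 - x / 2 := by
  have hx : 0 < 1 + x := by linarith
  calc exp (-x) = (exp x)⁻¹ := exp_neg x
    _ ≤ (1 + x)⁻¹ := inv_anti₀ hx (by linarith [add_one_le_exp x])
    _ ≤ 1 - x / 2 := by rw [inv_le_iff_one_le_mul₀ hx]; nlinarith

lemma ofReal_one_sub_le_of_measure_compl_le {Ω : Type*} {m0 : MeasurableSpace Ω} {μ : Measure Ω}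
    [IsProbabilityMeasure μ] {s : Set Ω} {ε : ℝ} (hε : 0 ≤ ε) (h : μ sᶜ ≤ ENNReal.ofReal ε) :
    ENNReal.ofReal (1 - ε) ≤ μ s := by
  rw [ENNReal.ofReal_sub _ hε, ENNReal.ofReal_one, tsub_le_iff_right]
  calc 1 = μ (s ∪ sᶜ) := by rw [Set.union_compl_self, measure_univ]
    _ ≤ μ s + μ sᶜ := measure_union_le _ _
    _ ≤ μ s + ENNReal.ofReal ε := by gcongr

section CondExp

variable {Ω : Type*} {m m0 : MeasurableSpace Ω} {μ : Measure Ω} [IsFiniteMeasure μ]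

lemma integrable_exp_neg_div {f : Ω → ℝ} (hf : AEStronglyMeasurable f μ) {c : ℝ} (hc : 0 ≤ c)
    (h0 : ∀ᵐ ω ∂μ, 0 ≤ f ω) : Integrable (fun ω => exp (-(f ω / c))) μ := by
  refine .of_bound (by fun_prop) 1 ?_
  filter_upwards [h0] with ω h
  rw [Real.norm_of_nonneg (exp_pos _).le, exp_le_one_iff, neg_nonpos]
  exact div_nonneg h hc

lemma condExp_exp_neg_div_le (hm : m ≤ m0) {f : Ω → ℝ} (hf : AEStronglyMeasurable f μ) {c : ℝ}
    (hc : 0 < c) (hbdd : ∀ᵐ ω ∂μ, 0 ≤ f ω ∧ f ω ≤ c) :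
    μ[fun ω => exp (-(f ω / c)) | m] ≤ᵐ[μ] fun ω => exp (-(μ[f | m] ω / (2 * c))) := by
  have hf_int : Integrable f μ := .of_mem_Icc 0 c hf.aemeasurable hbdd
  have hexp_int := integrable_exp_neg_div hf hc.le (hbdd.mono fun _ h => h.1)
  have hlin_int : Integrable (fun ω => 1 - f ω / (2 * c)) μ :=
    (integrable_const 1).sub (hf_int.div_const _)
  have hexp_le_lin : (fun ω => exp (-(f ω / c))) ≤ᵐ[μ] fun ω => 1 - f ω / (2 * c) := by
    filter_upwards [hbdd] with ω h
    have := exp_neg_le_one_sub_half (div_nonneg h.1 hc.le) ((div_le_one hc).2 h.2)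
    rwa [div_div, mul_comm] at this
  have hcondExp_lin :
      μ[fun ω => 1 - f ω / (2 * c) | m] =ᵐ[μ] fun ω => 1 - μ[f | m] ω / (2 * c) := by
    have hlin : (fun ω => 1 - f ω / (2 * c)) = (fun _ => (1 : ℝ)) - (2 * c)⁻¹ • f := by
      ext ω; simp [div_eq_inv_mul]
    rw [hlin]
    filter_upwards [condExp_sub (integrable_const 1) (hf_int.smul (2 * c)⁻¹) m,
      condExp_smul (μ := μ) (2 * c)⁻¹ f m] with ω hsub hsmul
    rw [hsub, Pi.sub_apply, condExp_const hm, hsmul]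
    simp [div_eq_inv_mul]
  filter_upwards [condExp_mono hexp_int hlin_int hexp_le_lin, hcondExp_lin] with ω hle heq
  rw [heq] at hle
  linarith [add_one_le_exp (-(μ[f | m] ω / (2 * c)))]

end CondExp

lemma measure_exists_mul_sq_le_le {Ω : Type*} {m0 : MeasurableSpace Ω} {μ : Measure Ω}
    [IsFiniteMeasure μ] {W : ℕ → Ω → ℝ} (hW0 : ∀ K, 0 ≤ᵐ[μ] W K)
    (hW_int : ∀ K, Integrable (W K) μ) (hW_le : ∀ K, ∫ ω, W K ω ∂μ ≤ 1) {a : ℝ} (ha : 0 < a) :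
    μ {ω | ∃ K : ℕ, 1 ≤ K ∧ a * K ^ 2 ≤ W K ω} ≤ ENNReal.ofReal (π ^ 2 / (6 * a)) := by
  have hmarkov : ∀ K : ℕ,
      μ {ω | 1 ≤ K ∧ a * K ^ 2 ≤ W K ω} ≤ ENNReal.ofReal (a⁻¹ * (1 / (K : ℝ) ^ 2)) := by
    intro K
    rcases Nat.eq_zero_or_pos K with rfl | hK
    · simp
    simp only [Nat.one_le_iff_ne_zero.2 hK.ne', true_and]
    rw [ENNReal.le_ofReal_iff_toReal_le (measure_ne_top _ _) (by positivity), ← div_eq_inv_mul,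
      le_div_iff₀ ha, le_div_iff₀ (by positivity), mul_assoc, mul_comm]
    exact (mul_meas_ge_le_integral_of_nonneg (hW0 K) (hW_int K) _).trans (hW_le K)
  have hzeta := hasSum_zeta_two.mul_left a⁻¹
  calc μ {ω | ∃ K : ℕ, 1 ≤ K ∧ a * K ^ 2 ≤ W K ω}
      = μ (⋃ K : ℕ, {ω | 1 ≤ K ∧ a * K ^ 2 ≤ W K ω}) := by rw [Set.ofPred_exists]
    _ ≤ ∑' K : ℕ, μ {ω | 1 ≤ K ∧ a * K ^ 2 ≤ W K ω} := measure_iUnion_le _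
    _ ≤ ∑' K : ℕ, ENNReal.ofReal (a⁻¹ * (1 / (K : ℝ) ^ 2)) := ENNReal.tsum_le_tsum hmarkov
    _ = ENNReal.ofReal (π ^ 2 / (6 * a)) := by
      rw [← ENNReal.ofReal_tsum_of_nonneg (fun _ => by positivity) hzeta.summable, hzeta.tsum_eq]
      congr 1
      field_simp

section CompensatedExp

variable {Ω : Type*} {m0 : MeasurableSpace Ω} {μ : Measure Ω} {ℱ : Filtration ℕ m0}
  {X : ℕ → Ω → ℝ} {c : ℝ}

noncomputable def compensatedExp (μ : Measure Ω) (ℱ : Filtration ℕ m0) (X : ℕ → Ω → ℝ) (c : ℝ)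
    (K : ℕ) (ω : Ω) : ℝ :=
  exp ((∑ k ∈ Icc 1 K, (μ[X k | ℱ (k - 1)] ω / 2 - X k ω)) / c)

lemma compensatedExp_zero : compensatedExp μ ℱ X c 0 = 1 := by
  ext; simp [compensatedExp]

lemma compensatedExp_succ (K : ℕ) (ω : Ω) :
    compensatedExp μ ℱ X c (K + 1) ω = compensatedExp μ ℱ X c K ω *
      exp (μ[X (K + 1) | ℱ K] ω / (2 * c)) * exp (-(X (K + 1) ω / c)) := by
  rw [compensatedExp, compensatedExp, sum_Icc_succ_top (by omega), ← exp_add, ← exp_add,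
    Nat.add_sub_cancel]
  congr 1
  ring

lemma compensatedExp_pos {K : ℕ} {ω : Ω} : 0 < compensatedExp μ ℱ X c K ω :=
  exp_pos _

lemma stronglyAdapted_compensatedExp (hX : Adapted ℱ X) :
    StronglyAdapted ℱ (compensatedExp μ ℱ X c) := by
  intro K
  refine Measurable.stronglyMeasurable (((Finset.measurable_sum _ fun k hk => ?_).div_const c).exp)
  have hk := Finset.mem_Icc.1 hk
  exact ((stronglyMeasurable_condExp.measurable.mono (ℱ.mono (by omega)) le_rfl).div_const 2).sub
    ((hX k).mono (ℱ.mono hk.2) le_rfl)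

lemma sq_le_compensatedExp_of_lt (hc : 0 < c) {t : ℝ} (ht : 0 < t) {K : ℕ} {ω : Ω}
    (h : 2 * ∑ k ∈ Icc 1 K, X k ω + 4 * c * log t < ∑ k ∈ Icc 1 K, μ[X k | ℱ (k - 1)] ω) :
    t ^ 2 ≤ compensatedExp μ ℱ X c K ω := by
  rw [compensatedExp, ← exp_log (pow_pos ht 2), log_pow, exp_le_exp, sum_sub_distrib, ← sum_div,
    le_div_iff₀ hc]
  push_cast
  linarith

variable [IsFiniteMeasure μ]

lemma compensatedExp_le_exp (hX : Adapted ℱ X) (hc : 0 < c)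
    (hbdd : ∀ k, ∀ᵐ ω ∂μ, 0 ≤ X k ω ∧ X k ω ≤ c) (K : ℕ) :
    ∀ᵐ ω ∂μ, compensatedExp μ ℱ X c K ω ≤ exp K := by
  have hcondExp_le k : ∀ᵐ ω ∂μ, μ[X k | ℱ (k - 1)] ω ≤ c := by
    have hX_int : Integrable (X k) μ :=
      .of_mem_Icc 0 c ((hX k).mono (ℱ.le k) le_rfl).aemeasurable (hbdd k)
    have := condExp_mono (m := ℱ (k - 1)) hX_int (integrable_const c)
      (hbdd k |>.mono fun _ h => h.2)
    rwa [condExp_const (ℱ.le _)] at this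
  filter_upwards [ae_all_iff.2 hbdd, ae_all_iff.2 hcondExp_le] with ω hX hY
  rw [compensatedExp, exp_le_exp, div_le_iff₀ hc]
  calc ∑ k ∈ Icc 1 K, (μ[X k | ℱ (k - 1)] ω / 2 - X k ω)
      ≤ ∑ k ∈ Icc 1 K, c := sum_le_sum fun k _ => by linarith [hX k, hY k]
    _ = K * c := by simp

lemma integrable_compensatedExp (hX : Adapted ℱ X) (hc : 0 < c)
    (hbdd : ∀ k, ∀ᵐ ω ∂μ, 0 ≤ X k ω ∧ X k ω ≤ c) (K : ℕ) :
    Integrable (compensatedExp μ ℱ X c K) μ := by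
  refine .of_bound ((stronglyAdapted_compensatedExp hX K).mono (ℱ.le K)).aestronglyMeasurable
    (exp K) ?_
  filter_upwards [compensatedExp_le_exp hX hc hbdd K] with ω h
  rwa [Real.norm_of_nonneg compensatedExp_pos.le]

lemma supermartingale_compensatedExp (hX : Adapted ℱ X) (hc : 0 < c)
    (hbdd : ∀ k, ∀ᵐ ω ∂μ, 0 ≤ X k ω ∧ X k ω ≤ c) :
    Supermartingale (compensatedExp μ ℱ X c) ℱ μ := by
  have hint := integrable_compensatedExp hX hc hbdd
  refine supermartingale_nat (stronglyAdapted_compensatedExp hX) hint fun K => ?_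
  set g : Ω → ℝ := fun ω => compensatedExp μ ℱ X c K ω * exp (μ[X (K + 1) | ℱ K] ω / (2 * c))
  have hg : StronglyMeasurable[ℱ K] g := (stronglyAdapted_compensatedExp hX K).mul
    (stronglyMeasurable_condExp.measurable.div_const _).exp.stronglyMeasurable
  have hsucc : compensatedExp μ ℱ X c (K + 1) = g * fun ω => exp (-(X (K + 1) ω / c)) :=
    funext (compensatedExp_succ K)
  have hXK_meas : AEStronglyMeasurable (X (K + 1)) μ :=
    ((hX (K + 1)).mono (ℱ.le _) le_rfl).aestronglyMeasurable
  rw [hsucc]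
  filter_upwards [condExp_mul_of_stronglyMeasurable_left hg (hsucc ▸ hint (K + 1))
      (integrable_exp_neg_div hXK_meas hc.le ((hbdd (K + 1)).mono fun _ h => h.1)),
    condExp_exp_neg_div_le (ℱ.le K) hXK_meas hc (hbdd (K + 1))] with ω hpull hle
  rw [hpull, Pi.mul_apply]
  calc g ω * μ[fun ω => exp (-(X (K + 1) ω / c)) | ℱ K] ω
      ≤ g ω * exp (-(μ[X (K + 1) | ℱ K] ω / (2 * c))) := by
        gcongr
        exact (mul_pos compensatedExp_pos (exp_pos _)).le
    _ = compensatedExp μ ℱ X c K ω := by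
        rw [mul_assoc, ← exp_add, add_neg_cancel, exp_zero, mul_one]

end CompensatedExp

theorem cond_exp_sum_concentration {Ω : Type*} {m0 : MeasurableSpace Ω}
    (μ : Measure Ω) [IsProbabilityMeasure μ] (ℱ : Filtration ℕ m0)
    (X : ℕ → Ω → ℝ) (hadapted : Adapted ℱ X)
    (Xmax : ℝ) (hXmax : 0 < Xmax)
    (hbdd : ∀ k, ∀ᵐ ω ∂μ, 0 ≤ X k ω ∧ X k ω ≤ Xmax)
    (δ : ℝ) (hδ0 : 0 < δ) (hδ1 : δ < 1) :
    ENNReal.ofReal (1 - δ) ≤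
      μ {ω | ∀ K : ℕ, 1 ≤ K →
        ∑ k ∈ Finset.Icc 1 K, (μ[X k | ℱ (k - 1)]) ω ≤
          2 * ∑ k ∈ Finset.Icc 1 K, X k ω + 4 * Xmax * Real.log (2 * K / δ)} := by
  have hW := supermartingale_compensatedExp (μ := μ) hadapted hXmax hbdd
  have hW_le K : ∫ ω, compensatedExp μ ℱ X Xmax K ω ∂μ ≤ 1 := by
    simpa [compensatedExp_zero] using hW.setIntegral_le (Nat.zero_le K) MeasurableSet.univ
  have hbad : {ω | ∀ K : ℕ, 1 ≤ K → ∑ k ∈ Icc 1 K, (μ[X k | ℱ (k - 1)]) ω ≤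
        2 * ∑ k ∈ Icc 1 K, X k ω + 4 * Xmax * log (2 * K / δ)}ᶜ ⊆
      {ω | ∃ K : ℕ, 1 ≤ K ∧ 4 / δ ^ 2 * K ^ 2 ≤ compensatedExp μ ℱ X Xmax K ω} := by
    intro ω hω
    simp only [Set.mem_compl_iff, Set.mem_ofPred_eq, not_forall, not_le] at hω
    obtain ⟨K, hK, hlt⟩ := hω
    exact ⟨K, hK, le_of_eq_of_le (by ring) (sq_le_compensatedExp_of_lt hXmax (by positivity) hlt)⟩
  have hδ : π ^ 2 / (6 * (4 / δ ^ 2)) ≤ δ := by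
    rw [div_le_iff₀ (by positivity)]
    field_simp
    nlinarith [pi_lt_four, pi_pos]
  refine ofReal_one_sub_le_of_measure_compl_le hδ0.le ((measure_mono hbad).trans
    ((measure_exists_mul_sq_le_le (fun _ => .of_forall fun _ => compensatedExp_pos.le)
      (integrable_compensatedExp hadapted hXmax hbdd) hW_le (by positivity)).trans
    (ENNReal.ofReal_le_ofReal hδ)))
end

section
/- Let {φ_j} be vectors in ℝ^d with ‖φ_j‖ ≤ 1, let Λ_0 be a positive definite matrix with smallest eigenvalue at least 1, and define Λ_t = Λ_0 + ∑_{j=1}^t φ_j φ_jᵀ. Then ∑_{j=1}^t φ_jᵀ Λ_{j−1}^{−1} φ_j ≤ 2 log(det Λ_t / det Λ_0). -/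
/-! By the matrix determinant lemma each rank-one update multiplies the determinant by `1 + x_j`,
where `x_j = φ_jᵀ Λ_{j-1}⁻¹ φ_j`, so `log (det Λ_t / det Λ_0) = ∑ log (1 + x_j)`. Since
`Λ_{j-1} ⪰ I` and `‖φ_j‖ ≤ 1` we have `0 ≤ x_j ≤ 1`, and `x ≤ 2 log (1 + x)` on `[0, 1]`. -/

open Matrix

lemma Real.le_two_mul_log_one_add {x : ℝ} (h0 : 0 ≤ x) (h1 : x ≤ 1) :
    x ≤ 2 * Real.log (1 + x) := by
  have := Real.le_log_one_add_of_nonneg h0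
  rw [div_le_iff₀ (by linarith)] at this
  nlinarith

namespace Matrix

variable {n : Type*} [Fintype n]

lemma dotProduct_self_le_dotProduct_add_posSemidef {A B : Matrix n n ℝ}
    (hA : ∀ v, v ⬝ᵥ v ≤ v ⬝ᵥ (A *ᵥ v)) (hB : B.PosSemidef) (v : n → ℝ) :
    v ⬝ᵥ v ≤ v ⬝ᵥ ((A + B) *ᵥ v) := by
  have hBv : 0 ≤ v ⬝ᵥ (B *ᵥ v) := by simpa using hB.dotProduct_mulVec_nonneg v
  rw [add_mulVec, dotProduct_add]
  linarith [hA v]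

lemma posDef_of_succ_eq_add_vecMulVec {A : ℕ → Matrix n n ℝ} {u : ℕ → n → ℝ}
    (hA : ∀ s, A (s + 1) = A s + vecMulVec (u (s + 1)) (u (s + 1))) (h0 : (A 0).PosDef)
    (s : ℕ) : (A s).PosDef := by
  induction s with
  | zero => exact h0
  | succ s ih =>
    rw [hA]
    simpa using ih.add_posSemidef (posSemidef_vecMulVec_self_star (u (s + 1)))

lemma dotProduct_self_le_of_succ_eq_add_vecMulVec {A : ℕ → Matrix n n ℝ} {u : ℕ → n → ℝ}
    (hA : ∀ s, A (s + 1) = A s + vecMulVec (u (s + 1)) (u (s + 1)))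
    (h0 : ∀ v, v ⬝ᵥ v ≤ v ⬝ᵥ (A 0 *ᵥ v)) (s : ℕ) (v : n → ℝ) :
    v ⬝ᵥ v ≤ v ⬝ᵥ (A s *ᵥ v) := by
  induction s generalizing v with
  | zero => exact h0 v
  | succ s ih =>
    rw [hA]
    exact dotProduct_self_le_dotProduct_add_posSemidef ih
      (by simpa using posSemidef_vecMulVec_self_star (u (s + 1))) v

variable [DecidableEq n]

theorem det_add_vecMulVec {α : Type*} [CommRing α] {A : Matrix n n α}
    (hA : IsUnit A.det) (u v : n → α) :
    (A + vecMulVec u v).det = A.det * (1 + v ⬝ᵥ (A⁻¹ *ᵥ u)) := by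
  have hfactor : A + vecMulVec u v = A * (1 + vecMulVec (A⁻¹ *ᵥ u) v) := by
    rw [Matrix.mul_add, Matrix.mul_one, mul_vecMulVec, mulVec_mulVec, mul_nonsing_inv _ hA,
      one_mulVec]
  rw [hfactor, det_mul, vecMulVec_eq Unit, det_one_add_replicateCol_mul_replicateRow]

lemma inv_mulVec_dotProduct_self_le {A : Matrix n n ℝ} (hA : IsUnit A.det)
    (hI : ∀ v, v ⬝ᵥ v ≤ v ⬝ᵥ (A *ᵥ v)) (u : n → ℝ) :
    A⁻¹ *ᵥ u ⬝ᵥ A⁻¹ *ᵥ u ≤ u ⬝ᵥ (A⁻¹ *ᵥ u) := by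
  simpa [mulVec_mulVec, mul_nonsing_inv _ hA, dotProduct_comm u] using hI (A⁻¹ *ᵥ u)

lemma dotProduct_inv_mulVec_nonneg {A : Matrix n n ℝ} (hA : IsUnit A.det)
    (hI : ∀ v, v ⬝ᵥ v ≤ v ⬝ᵥ (A *ᵥ v)) (u : n → ℝ) :
    0 ≤ u ⬝ᵥ (A⁻¹ *ᵥ u) :=
  (dotProduct_self_star_nonneg _).trans (inv_mulVec_dotProduct_self_le hA hI u)

lemma dotProduct_inv_mulVec_le_dotProduct_self {A : Matrix n n ℝ}
    (hA : IsUnit A.det) (hI : ∀ v, v ⬝ᵥ v ≤ v ⬝ᵥ (A *ᵥ v)) (u : n → ℝ) :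
    u ⬝ᵥ (A⁻¹ *ᵥ u) ≤ u ⬝ᵥ u := by
  set ψ := A⁻¹ *ᵥ u
  have hψ : ψ ⬝ᵥ ψ ≤ u ⬝ᵥ ψ := inv_mulVec_dotProduct_self_le hA hI u
  have hCS : (u ⬝ᵥ ψ) ^ 2 ≤ (u ⬝ᵥ u) * (ψ ⬝ᵥ ψ) := by
    simpa [dotProduct, pow_two] using Finset.sum_mul_sq_le_sq_mul_sq Finset.univ u ψ
  have huu : 0 ≤ u ⬝ᵥ u := dotProduct_self_star_nonneg u
  -- `hCS` and `hψ` give `(u ⬝ᵥ ψ)² ≤ (u ⬝ᵥ u) * (u ⬝ᵥ ψ)`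
  nlinarith [dotProduct_inv_mulVec_nonneg hA hI u]

lemma dotProduct_inv_mulVec_le_two_mul_log_det_div {A : Matrix n n ℝ}
    (hA : 0 < A.det) (hI : ∀ v, v ⬝ᵥ v ≤ v ⬝ᵥ (A *ᵥ v)) {u : n → ℝ} (hu : u ⬝ᵥ u ≤ 1) :
    u ⬝ᵥ (A⁻¹ *ᵥ u) ≤ 2 * Real.log ((A + vecMulVec u u).det / A.det) := by
  have hunit : IsUnit A.det := hA.ne'.isUnit
  rw [det_add_vecMulVec hunit, mul_div_cancel_left₀ _ hA.ne']
  exact Real.le_two_mul_log_one_add (dotProduct_inv_mulVec_nonneg hunit hI u)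
    ((dotProduct_inv_mulVec_le_dotProduct_self hunit hI u).trans hu)

theorem sum_dotProduct_inv_mulVec_le_two_mul_log_det_div {A : ℕ → Matrix n n ℝ} {u : ℕ → n → ℝ}
    (hA : ∀ s, A (s + 1) = A s + vecMulVec (u (s + 1)) (u (s + 1))) (h0 : (A 0).PosDef)
    (hI : ∀ v, v ⬝ᵥ v ≤ v ⬝ᵥ (A 0 *ᵥ v)) (hu : ∀ j, u j ⬝ᵥ u j ≤ 1) (t : ℕ) :
    ∑ j ∈ Finset.Icc 1 t, u j ⬝ᵥ ((A (j - 1))⁻¹ *ᵥ u j) ≤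
      2 * Real.log ((A t).det / (A 0).det) := by
  have hdet s : 0 < (A s).det := (posDef_of_succ_eq_add_vecMulVec hA h0 s).det_pos
  induction t with
  | zero => simp [(hdet 0).ne']
  | succ t ih =>
    have hstep := dotProduct_inv_mulVec_le_two_mul_log_det_div (hdet t)
      (dotProduct_self_le_of_succ_eq_add_vecMulVec hA hI t) (hu (t + 1))
    rw [← hA] at hstep
    have hlog : Real.log ((A (t + 1)).det / (A 0).det) =
        Real.log ((A t).det / (A 0).det) + Real.log ((A (t + 1)).det / (A t).det) := by
      rw [← Real.log_mul (div_pos (hdet t) (hdet 0)).ne' (div_pos (hdet _) (hdet t)).ne',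
        div_mul_div_cancel₀' (hdet t).ne']
    rw [Finset.sum_Icc_succ_top (Nat.le_add_left 1 t), Nat.add_sub_cancel, hlog]
    linarith

end Matrix

theorem elliptical_potential_bound_general (d : ℕ)
    (Λ0 : Matrix (Fin d) (Fin d) ℝ) (hΛ0 : Λ0.PosDef)
    (hmin : ∀ v : Fin d → ℝ, v ⬝ᵥ v ≤ v ⬝ᵥ (Λ0 *ᵥ v))
    (φ : ℕ → Fin d → ℝ) (hφ : ∀ j, φ j ⬝ᵥ φ j ≤ 1)
    (Λ : ℕ → Matrix (Fin d) (Fin d) ℝ)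
    (hΛ : ∀ s, Λ s = Λ0 + ∑ j ∈ Finset.Icc 1 s, vecMulVec (φ j) (φ j))
    (t : ℕ) :
    ∑ j ∈ Finset.Icc 1 t, φ j ⬝ᵥ ((Λ (j - 1))⁻¹ *ᵥ φ j) ≤
      2 * Real.log ((Λ t).det / Λ0.det) := by
  have hΛ_zero : Λ 0 = Λ0 := by simp [hΛ 0]
  have hΛ_succ s : Λ (s + 1) = Λ s + vecMulVec (φ (s + 1)) (φ (s + 1)) := by
    rw [hΛ, hΛ, Finset.sum_Icc_succ_top (Nat.le_add_left 1 s), add_assoc]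
  subst hΛ_zero
  exact sum_dotProduct_inv_mulVec_le_two_mul_log_det_div hΛ_succ hΛ0 hmin hφ t

theorem elliptical_potential_bound (d : ℕ) (hd : 0 < d)
    (Λ0 : Matrix (Fin d) (Fin d) ℝ) (hΛ0 : Λ0.PosDef)
    (hmin : ∀ v : Fin d → ℝ, v ⬝ᵥ v ≤ v ⬝ᵥ (Λ0 *ᵥ v))
    (φ : ℕ → Fin d → ℝ) (hφ : ∀ j, φ j ⬝ᵥ φ j ≤ 1)
    (Λ : ℕ → Matrix (Fin d) (Fin d) ℝ)
    (hΛ : ∀ s, Λ s = Λ0 + ∑ j ∈ Finset.Icc 1 s, vecMulVec (φ j) (φ j))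
    (t : ℕ) :
    ∑ j ∈ Finset.Icc 1 t, φ j ⬝ᵥ ((Λ (j - 1))⁻¹ *ᵥ φ j) ≤
      2 * Real.log ((Λ t).det / Λ0.det) :=
  elliptical_potential_bound_general d Λ0 hΛ0 hmin φ hφ Λ hΛ t
end

section
/- If M and N are symmetric positive definite d×d matrices with M ⪯ N, then for every vector v ∈ ℝ^d, vᵀNv ≤ (det N / det M) · vᵀMv. -/
/-!
Write `M = R²` with `R = √M` and put `S = R⁻¹ N R⁻¹`. Then `M ⪯ N` becomes `1 ⪯ S`, so every
eigenvalue of `S` is at least `1` and hence at most their product `det S = det N / det M`. Thus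
`S ⪯ (det S) • 1`, and conjugating back by `R` gives `N ⪯ (det N / det M) • M`.
-/

open Matrix
open scoped MatrixOrder ComplexOrder

namespace Matrix

variable {𝕜 n : Type*} [RCLike 𝕜] [Fintype n] [DecidableEq n]

lemma le_det_smul_one_of_one_le {S : Matrix n n 𝕜} (hS : 1 ≤ S) : S ≤ S.det • 1 := by
  have hSH : S.IsHermitian := (zero_le_one.trans hS).posSemidef.isHermitian
  have one_le_eigenvalues (i : n) : 1 ≤ hSH.eigenvalues i :=
    (CFC.one_le_iff S hSH.isSelfAdjoint).1 hS _ (hSH.eigenvalues_mem_spectrum_real i)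
  have hdet : S.det • (1 : Matrix n n 𝕜) = algebraMap ℝ _ (∏ i, hSH.eigenvalues i) := by
    rw [hSH.det_eq_prod_eigenvalues, Algebra.algebraMap_eq_smul_one, ← RCLike.ofReal_prod]
    exact algebraMap_smul 𝕜 _ _
  rw [hdet]
  refine le_algebraMap_of_spectrum_le (fun x hx => ?_) hSH.isSelfAdjoint
  obtain ⟨i, rfl⟩ := hSH.spectrum_real_eq_range_eigenvalues ▸ hx
  simpa using Finset.prod_le_prod_of_subset_of_one_le
    (Finset.singleton_subset_iff.2 (Finset.mem_univ i))
    (by simpa using zero_le_one.trans (one_le_eigenvalues i)) fun j _ _ => one_le_eigenvalues j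

lemma le_det_div_det_smul_of_le {M N : Matrix n n 𝕜} (hM : M.PosDef) (hMN : M ≤ N) :
    N ≤ (N.det / M.det) • M := by
  set R := CFC.sqrt M
  have hRR : R * R = M := CFC.sqrt_mul_sqrt_self M hM.posSemidef.nonneg
  have hR : IsUnit R.det := (isUnit_iff_isUnit_det R).1 <|
    CFC.isUnit_sqrt_iff_isStrictlyPositive.2 (isStrictlyPositive_iff_posDef.2 hM)
  have hRinv : IsSelfAdjoint R⁻¹ := (CFC.sqrt_nonneg M).posSemidef.isHermitian.inv
  have hM_conj : R⁻¹ * M * R⁻¹ = 1 := by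
    rw [← hRR, ← mul_assoc, nonsing_inv_mul _ hR, one_mul, mul_nonsing_inv _ hR]
  set S := R⁻¹ * N * R⁻¹
  have hN_conj : N = R * S * R := by
    rw [← mul_assoc, ← mul_assoc, mul_nonsing_inv _ hR, one_mul,
      nonsing_inv_mul_cancel_right _ _ hR]
  have hdetS : S.det = N.det / M.det := by
    rw [← hRR, det_mul, det_mul, det_mul, det_nonsing_inv, Ring.inverse_eq_inv']
    field_simp [hR.ne_zero]
  have hS : 1 ≤ S := hM_conj ▸ hRinv.conjugate_le_conjugate hMN
  calc N = R * S * R := hN_conj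
    _ ≤ R * (S.det • 1) * R :=
      (CFC.sqrt_nonneg M).isSelfAdjoint.conjugate_le_conjugate (le_det_smul_one_of_one_le hS)
    _ = (N.det / M.det) • M := by rw [hdetS, mul_smul_comm, smul_mul_assoc, mul_one, hRR]

end Matrix

theorem quadratic_form_det_bound_general (d : ℕ) (M N : Matrix (Fin d) (Fin d) ℝ)
    (hM : M.PosDef) (hMN : (N - M).PosSemidef) (v : Fin d → ℝ) :
    v ⬝ᵥ (N *ᵥ v) ≤ (N.det / M.det) * (v ⬝ᵥ (M *ᵥ v)) := by
  have h := (le_iff.1 (le_det_div_det_smul_of_le hM hMN)).dotProduct_mulVec_nonneg v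
  rw [sub_mulVec, smul_mulVec, dotProduct_sub, dotProduct_smul, star_trivial, smul_eq_mul] at h
  linarith

theorem quadratic_form_det_bound (d : ℕ) (M N : Matrix (Fin d) (Fin d) ℝ)
    (hM : M.PosDef) (hN : N.PosDef) (hMN : (N - M).PosSemidef) (v : Fin d → ℝ) :
    v ⬝ᵥ (N *ᵥ v) ≤ (N.det / M.det) * (v ⬝ᵥ (M *ᵥ v)) :=
  quadratic_form_det_bound_general d M N hM hMN v
end

section
/- For any two stationary policies π and π′ in a γ-discounted MDP, the KL divergence between their occupancy measures satisfies D_KL(μ(π) ‖ μ(π′)) ≤ (1/(1−γ)) ∑_x ν(π, x) D_KL(π(·|x) ‖ π′(·|x)). -/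
/-- Kullback--Leibler divergence between two finitely supported distributions on a
finite set, written with the natural logarithm (assuming absolute continuity). -/
noncomputable def klFin {A : Type*} [Fintype A] (p q : A → ℝ) : ℝ :=
  ∑ a, p a * Real.log (p a / q a)

/-- KL divergence between two distributions on the countable set `X × A`. -/
noncomputable def klPair {X A : Type*} [Fintype A] (p q : X → A → ℝ) : ℝ :=
  ∑' x : X, ∑ a, p x a * Real.log (p x a / q x a)

/-!
By the chain rule, `KL(μ ‖ μ') = KL(ν ‖ ν') + ⟨ν, KL(π ‖ π')⟩`. The flow constraint writes `ν`
and `ν'` as the same mixture of `P`-images of `μ`, `μ'` (weight `γ`) and of `ν₀` (weight `1 - γ`),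
so by data processing and joint convexity `KL(ν ‖ ν') ≤ γ KL(μ ‖ μ')`. Hence
`(1 - γ) KL(μ ‖ μ') ≤ ⟨ν, KL(π ‖ π')⟩`.

Data processing is proved state by state through the tangent-line bound
`m log r + m - m' r ≤ m log (m / m')` at the ratio `r = ν x / ν' x`.
-/

open Finset

section LogBounds

open Real

lemma mul_log_add_sub_mul_le_mul_log_div {m m' r : ℝ} (hm : 0 ≤ m) (hm' : 0 ≤ m')
    (hac : m' = 0 → m = 0) (hr : 0 < r) :
    m * log r + m - m' * r ≤ m * log (m / m') := by
  rcases hm.eq_or_lt with rfl | hm_pos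
  · simpa using mul_nonneg hm' hr.le
  have hm'_pos : 0 < m' := hm'.lt_of_ne' (mt hac hm_pos.ne')
  have hlog := log_le_sub_one_of_pos (div_pos hr (div_pos hm_pos hm'_pos))
  rw [log_div hr.ne' (by positivity)] at hlog
  have hcancel : m * (r / (m / m')) = m' * r := by field_simp
  nlinarith [mul_le_mul_of_nonneg_left hlog hm]

lemma klFin_const_mul {A : Type*} [Fintype A] {p q : A → ℝ} {s t : ℝ} (hp : ∑ a, p a = 1)
    (hac : ∀ a, t * q a = 0 → s * p a = 0) :
    klFin (fun a => s * p a) (fun a => t * q a) = s * log (s / t) + s * klFin p q := by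
  have hterm : ∀ a, s * p a * log (s * p a / (t * q a))
      = s * p a * log (s / t) + s * (p a * log (p a / q a)) := fun a => by
    by_cases h : s * p a = 0
    · simp [h, ← mul_assoc]
    obtain ⟨hs, hpa⟩ := mul_ne_zero_iff.mp h
    obtain ⟨ht, hqa⟩ := mul_ne_zero_iff.mp (mt (hac a) h)
    rw [← div_mul_div_comm, log_mul (div_ne_zero hs ht) (div_ne_zero hpa hqa)]
    ring
  simp only [klFin, hterm, sum_add_distrib, ← sum_mul, ← mul_sum, hp, mul_one]

variable {ι A : Type*} [Fintype A]

lemma tsum_sum_mul_log_add_sub_mul_le {w m m' : ι → A → ℝ} (hw : ∀ i a, 0 ≤ w i a)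
    (hm : ∀ i a, 0 ≤ m i a) (hm' : ∀ i a, 0 ≤ m' i a) (hac : ∀ i a, m' i a = 0 → m i a = 0)
    (hS : Summable fun i => ∑ a, w i a * m i a) (hS' : Summable fun i => ∑ a, w i a * m' i a)
    (hT : Summable fun i => ∑ a, w i a * (m i a * log (m i a / m' i a))) {r : ℝ} (hr : 0 < r) :
    (∑' i, ∑ a, w i a * m i a) * log r + ∑' i, ∑ a, w i a * m i a
        - (∑' i, ∑ a, w i a * m' i a) * r
      ≤ ∑' i, ∑ a, w i a * (m i a * log (m i a / m' i a)) := by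
  have hL := ((hS.mul_right (log r)).add hS).sub (hS'.mul_right r)
  rw [← tsum_mul_right, ← tsum_mul_right, ← (hS.mul_right _).tsum_add hS,
    ← ((hS.mul_right _).add hS).tsum_sub (hS'.mul_right _)]
  refine hL.tsum_le_tsum (fun i => ?_) hT
  simp only [sum_mul, ← sum_add_distrib, ← sum_sub_distrib]
  refine sum_le_sum fun a _ => ?_
  have htangent := mul_le_mul_of_nonneg_left
    (mul_log_add_sub_mul_le_mul_log_div (hm i a) (hm' i a) (hac i a) hr) (hw i a)
  linarith

lemma tsum_sum_mul_log_div_eq_zero_of_tsum_eq_zero {w m m' : ι → A → ℝ} (hw : ∀ i a, 0 ≤ w i a)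
    (hm : ∀ i a, 0 ≤ m i a) (hS : Summable fun i => ∑ a, w i a * m i a)
    (h0 : ∑' i, ∑ a, w i a * m i a = 0) :
    ∑' i, ∑ a, w i a * (m i a * log (m i a / m' i a)) = 0 := by
  have hnn : ∀ i a, 0 ≤ w i a * m i a := fun i a => mul_nonneg (hw i a) (hm i a)
  have hzero : ∀ i, ∑ a, w i a * m i a = 0 := congrFun <|
    (hasSum_zero_iff_of_nonneg fun i => sum_nonneg fun a _ => hnn i a).mp (h0 ▸ hS.hasSum)
  have hterm : ∀ i, ∑ a, w i a * (m i a * log (m i a / m' i a)) = 0 := fun i =>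
    sum_eq_zero fun a _ => by
      rw [← mul_assoc, (sum_eq_zero_iff_of_nonneg fun a _ => hnn i a).mp (hzero i) a (mem_univ a),
        zero_mul]
  simp only [hterm, tsum_zero]

lemma mul_log_div_le_of_eq_mix {w m m' : ι → A → ℝ} {γ c ν ν' : ℝ} (hγ : 0 < γ) (hc : 0 ≤ c)
    (hw : ∀ i a, 0 ≤ w i a) (hm : ∀ i a, 0 ≤ m i a) (hm' : ∀ i a, 0 ≤ m' i a)
    (hac : ∀ i a, m' i a = 0 → m i a = 0)
    (hS : Summable fun i => ∑ a, w i a * m i a) (hS' : Summable fun i => ∑ a, w i a * m' i a)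
    (hT : Summable fun i => ∑ a, w i a * (m i a * log (m i a / m' i a)))
    (hν : 0 ≤ ν) (hν' : 0 ≤ ν') (hνac : ν' = 0 → ν = 0)
    (hmix : ν = γ * ∑' i, ∑ a, w i a * m i a + c)
    (hmix' : ν' = γ * ∑' i, ∑ a, w i a * m' i a + c) :
    ν * log (ν / ν') ≤ γ * ∑' i, ∑ a, w i a * (m i a * log (m i a / m' i a)) := by
  rcases hν.eq_or_lt with rfl | hν_pos
  · have hS_nn : 0 ≤ ∑' i, ∑ a, w i a * m i a :=
      tsum_nonneg fun i => sum_nonneg fun a _ => mul_nonneg (hw i a) (hm i a)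
    have hγS : γ * ∑' i, ∑ a, w i a * m i a = 0 := by linarith [mul_nonneg hγ.le hS_nn]
    rw [tsum_sum_mul_log_div_eq_zero_of_tsum_eq_zero hw hm hS
      ((mul_eq_zero.mp hγS).resolve_left hγ.ne')]
    simp
  have hν'_pos : 0 < ν' := hν'.lt_of_ne' (mt hνac hν_pos.ne')
  have hr : 0 < ν / ν' := div_pos hν_pos hν'_pos
  have hrν' : ν' * (ν / ν') = ν := mul_div_cancel₀ ν hν'_pos.ne'
  have hlog := log_le_sub_one_of_pos hr
  -- the `ν₀`-part `c` only helps, since `log r ≤ r - 1` at `r = ν / ν'`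
  calc ν * log (ν / ν')
      ≤ ν * log (ν / ν') + c * (ν / ν' - 1 - log (ν / ν')) :=
        le_add_of_nonneg_right (mul_nonneg hc (by linarith))
    _ = γ * ((∑' i, ∑ a, w i a * m i a) * log (ν / ν') + ∑' i, ∑ a, w i a * m i a
          - (∑' i, ∑ a, w i a * m' i a) * (ν / ν')) := by
        linear_combination (log (ν / ν') + 1) * hmix - (ν / ν') * hmix' + hrν'
    _ ≤ γ * ∑' i, ∑ a, w i a * (m i a * log (m i a / m' i a)) :=
        mul_le_mul_of_nonneg_left (tsum_sum_mul_log_add_sub_mul_le hw hm hm' hac hS hS' hT hr) hγ.le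

end LogBounds

section Kernel

variable {X A : Type*} [Fintype A] {P : X → A → X → ℝ}

lemma summable_of_tsum_eq_one {f : X → ℝ} (h : ∑' x, f x = 1) : Summable f := by
  by_contra hf
  simp [tsum_eq_zero_of_not_summable hf] at h

lemma tsum_sum_kernel_mul (hP : ∀ x a, ∑' y, P x a y = 1) (f : X → A → ℝ) (x : X) :
    ∑' y, ∑ a, P x a y * f x a = ∑ a, f x a := by
  rw [Summable.tsum_finsetSum fun a _ => (summable_of_tsum_eq_one (hP x a)).mul_right _]
  simp only [tsum_mul_right, hP, one_mul]

lemma summable_prod_kernel_mul (hPnn : ∀ x a y, 0 ≤ P x a y) (hP : ∀ x a, ∑' y, P x a y = 1)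
    {f : X → A → ℝ} (hf : Summable fun x => ∑ a, |f x a|) :
    Summable fun p : X × X => ∑ a, P p.1 a p.2 * f p.1 a := by
  have hg_nn : 0 ≤ fun p : X × X => ∑ a, P p.1 a p.2 * |f p.1 a| := fun _ =>
    sum_nonneg fun _ _ => mul_nonneg (hPnn _ _ _) (abs_nonneg _)
  have hg : Summable fun p : X × X => ∑ a, P p.1 a p.2 * |f p.1 a| := by
    refine (summable_prod_of_nonneg hg_nn).mpr ⟨fun x => ?_, ?_⟩
    · exact summable_sum fun a _ => (summable_of_tsum_eq_one (hP x a)).mul_right |f x a|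
    · exact hf.congr fun x => (tsum_sum_kernel_mul hP (fun x a => |f x a|) x).symm
  refine hg.of_norm_bounded fun p => (abs_sum_le_sum_abs _ _).trans_eq (sum_congr rfl fun a _ => ?_)
  rw [abs_mul, abs_of_nonneg (hPnn _ _ _)]

lemma summable_sum_kernel_mul (hPnn : ∀ x a y, 0 ≤ P x a y) (hP : ∀ x a, ∑' y, P x a y = 1)
    {f : X → A → ℝ} (hf : Summable fun x => ∑ a, |f x a|) (y : X) :
    Summable fun x => ∑ a, P x a y * f x a :=
  (summable_prod_kernel_mul hPnn hP hf).prod_symm.prod_factor y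

lemma summable_tsum_sum_kernel_mul (hPnn : ∀ x a y, 0 ≤ P x a y)
    (hP : ∀ x a, ∑' y, P x a y = 1) {f : X → A → ℝ} (hf : Summable fun x => ∑ a, |f x a|) :
    Summable fun y => ∑' x, ∑ a, P x a y * f x a :=
  (summable_prod_kernel_mul hPnn hP hf).prod_symm.prod

lemma tsum_tsum_sum_kernel_mul (hPnn : ∀ x a y, 0 ≤ P x a y) (hP : ∀ x a, ∑' y, P x a y = 1)
    {f : X → A → ℝ} (hf : Summable fun x => ∑ a, |f x a|) :
    ∑' y, ∑' x, ∑ a, P x a y * f x a = ∑' x, ∑ a, f x a := by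
  rw [Summable.tsum_comm (f := fun x y => ∑ a, P x a y * f x a)
    (summable_prod_kernel_mul hPnn hP hf)]
  exact tsum_congr (tsum_sum_kernel_mul hP f)

end Kernel

lemma summable_sum_abs_of_eq_mul {X A : Type*} [Fintype A] {μ π : X → A → ℝ} {ν : X → ℝ}
    (hν : Summable ν) (hνnn : ∀ x, 0 ≤ ν x) (hπnn : ∀ x a, 0 ≤ π x a) (hπ : ∀ x, ∑ a, π x a = 1)
    (hμ : ∀ x a, μ x a = ν x * π x a) :
    Summable fun x => ∑ a, |μ x a| :=
  hν.congr fun x => by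
    simp only [hμ, abs_mul, abs_of_nonneg (hνnn x), abs_of_nonneg (hπnn x _), ← mul_sum, hπ,
      mul_one]

lemma klPair_chain_rule {X A : Type*} [Fintype A] {μ μ' π π' : X → A → ℝ} {ν ν' : X → ℝ}
    (hμ : ∀ x a, μ x a = ν x * π x a) (hμ' : ∀ x a, μ' x a = ν' x * π' x a)
    (hπ : ∀ x, ∑ a, π x a = 1) (hac : ∀ x a, μ' x a = 0 → μ x a = 0) (hνnn : ∀ x, 0 ≤ ν x)
    (hμsum : Summable fun x => ∑ a, |μ x a * Real.log (μ x a / μ' x a)|)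
    (hπsum : Summable fun x => ν x * ∑ a, |π x a * Real.log (π x a / π' x a)|) :
    HasSum (fun x => ν x * Real.log (ν x / ν' x))
      (klPair μ μ' - ∑' x, ν x * klFin (π x) (π' x)) := by
  have hchain : ∀ x,
      klFin (μ x) (μ' x) = ν x * Real.log (ν x / ν' x) + ν x * klFin (π x) (π' x) := fun x => by
    rw [funext (hμ x), funext (hμ' x)]
    exact klFin_const_mul (hπ x) fun a => by simpa only [hμ, hμ'] using hac x a
  have hF : Summable fun x => klFin (μ x) (μ' x) :=
    hμsum.of_norm_bounded fun x => abs_sum_le_sum_abs _ _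
  have hG : Summable fun x => ν x * klFin (π x) (π' x) := hπsum.of_norm_bounded fun x => by
    rw [norm_mul, Real.norm_of_nonneg (hνnn x)]
    exact mul_le_mul_of_nonneg_left (abs_sum_le_sum_abs _ _) (hνnn x)
  have hsplit : (fun x => ν x * Real.log (ν x / ν' x))
      = fun x => klFin (μ x) (μ' x) - ν x * klFin (π x) (π' x) :=
    funext fun x => by rw [hchain]; ring
  rw [hsplit]
  exact hF.hasSum.sub hG.hasSum

lemma tsum_mul_log_div_le_mul_klPair {X A : Type*} [Fintype A] {P : X → A → X → ℝ}
    {μ μ' : X → A → ℝ} {ν ν' c : X → ℝ} {γ : ℝ} (hγ : 0 < γ)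
    (hPnn : ∀ x a y, 0 ≤ P x a y) (hP : ∀ x a, ∑' y, P x a y = 1) (hc : ∀ x, 0 ≤ c x)
    (hμnn : ∀ x a, 0 ≤ μ x a) (hμ'nn : ∀ x a, 0 ≤ μ' x a) (hac : ∀ x a, μ' x a = 0 → μ x a = 0)
    (hνnn : ∀ x, 0 ≤ ν x) (hν'nn : ∀ x, 0 ≤ ν' x) (hνac : ∀ x, ν' x = 0 → ν x = 0)
    (hflow : ∀ x, ν x = γ * ∑' x', ∑ a, P x' a x * μ x' a + c x)
    (hflow' : ∀ x, ν' x = γ * ∑' x', ∑ a, P x' a x * μ' x' a + c x)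
    (hμ₁ : Summable fun x => ∑ a, |μ x a|) (hμ'₁ : Summable fun x => ∑ a, |μ' x a|)
    (hμsum : Summable fun x => ∑ a, |μ x a * Real.log (μ x a / μ' x a)|)
    (hνsum : Summable fun x => ν x * Real.log (ν x / ν' x)) :
    ∑' x, ν x * Real.log (ν x / ν' x) ≤ γ * klPair μ μ' := calc
  _ ≤ ∑' y, γ * ∑' x, ∑ a, P x a y * (μ x a * Real.log (μ x a / μ' x a)) :=
    hνsum.tsum_le_tsum (fun y => mul_log_div_le_of_eq_mix hγ (hc y) (fun x a => hPnn x a y)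
      hμnn hμ'nn hac (summable_sum_kernel_mul hPnn hP hμ₁ y)
      (summable_sum_kernel_mul hPnn hP hμ'₁ y) (summable_sum_kernel_mul hPnn hP hμsum y)
      (hνnn y) (hν'nn y) (hνac y) (hflow y) (hflow' y))
      ((summable_tsum_sum_kernel_mul hPnn hP hμsum).mul_left γ)
  _ = γ * klPair μ μ' := by rw [tsum_mul_left, tsum_tsum_sum_kernel_mul hPnn hP hμsum]; rfl

theorem occupancy_kl_le_general {X A : Type*} [Fintype A]
    (γ : ℝ) (hγ : γ ∈ Set.Ioo (0 : ℝ) 1)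
    (P : X → A → X → ℝ) (hPnn : ∀ x a x', 0 ≤ P x a x') (hP : ∀ x a, ∑' x', P x a x' = 1)
    (ν0 : X → ℝ) (hν0nn : ∀ x, 0 ≤ ν0 x)
    (π π' : X → A → ℝ)
    (hπnn : ∀ x a, 0 ≤ π x a) (hπ : ∀ x, ∑ a, π x a = 1)
    (hπ'nn : ∀ x a, 0 ≤ π' x a) (hπ' : ∀ x, ∑ a, π' x a = 1)
    (μ μ' : X → A → ℝ) (ν ν' : X → ℝ)
    (hνnn : ∀ x, 0 ≤ ν x) (hν'nn : ∀ x, 0 ≤ ν' x)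
    -- the occupancy measures factorize as state occupancy times policy
    (hμ : ∀ x a, μ x a = ν x * π x a) (hμ' : ∀ x a, μ' x a = ν' x * π' x a)
    -- flow constraints E^T μ = γ P^T μ + (1-γ) ν0
    (hflow : ∀ x, ν x = γ * ∑' x' : X, ∑ a', P x' a' x * μ x' a' + (1 - γ) * ν0 x)
    (hflow' : ∀ x, ν' x = γ * ∑' x' : X, ∑ a', P x' a' x * μ' x' a' + (1 - γ) * ν0 x)
    (hνsum : Summable ν) (hν'sum : Summable ν')
    -- absolute continuity (otherwise the KL divergences are infinite by convention)
    (hacμ : ∀ x a, μ' x a = 0 → μ x a = 0)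
    -- absolute convergence of the relevant series
    (hsum1 : Summable fun x => ∑ a, |μ x a * Real.log (μ x a / μ' x a)|)
    (hsum2 : Summable fun x => ν x * ∑ a, |π x a * Real.log (π x a / π' x a)|) :
    klPair μ μ' ≤ (1 / (1 - γ)) * ∑' x : X, ν x * klFin (π x) (π' x) := by
  obtain ⟨hγ0, hγ1⟩ := hγ
  have hμnn : ∀ x a, 0 ≤ μ x a := fun x a => (hμ x a).symm ▸ mul_nonneg (hνnn x) (hπnn x a)
  have hμ'nn : ∀ x a, 0 ≤ μ' x a := fun x a => (hμ' x a).symm ▸ mul_nonneg (hν'nn x) (hπ'nn x a)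
  have hνac : ∀ x, ν' x = 0 → ν x = 0 := fun x h => by
    rw [← mul_one (ν x), ← hπ x, mul_sum]
    exact sum_eq_zero fun a _ => hμ x a ▸ hacμ x a (by rw [hμ', h, zero_mul])
  have hchain := klPair_chain_rule hμ hμ' hπ hacμ hνnn hsum1 hsum2
  have hdp := tsum_mul_log_div_le_mul_klPair hγ0 hPnn hP
    (fun x => mul_nonneg (sub_nonneg.mpr hγ1.le) (hν0nn x)) hμnn hμ'nn hacμ hνnn hν'nn hνac
    hflow hflow' (summable_sum_abs_of_eq_mul hνsum hνnn hπnn hπ hμ)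
    (summable_sum_abs_of_eq_mul hν'sum hν'nn hπ'nn hπ' hμ') hsum1 hchain.summable
  rw [hchain.tsum_eq] at hdp
  rw [one_div_mul_eq_div, le_div_iff₀ (sub_pos.mpr hγ1)]
  linarith

/-- The relative entropy between occupancy measures of two policies is bounded by
`1/(1-γ)` times the expected relative entropy between the policies. -/
theorem occupancy_kl_le {X A : Type*} [Countable X] [Fintype A]
    (γ : ℝ) (hγ : γ ∈ Set.Ioo (0 : ℝ) 1)
    (P : X → A → X → ℝ) (hPnn : ∀ x a x', 0 ≤ P x a x') (hP : ∀ x a, ∑' x', P x a x' = 1)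
    (ν0 : X → ℝ) (hν0nn : ∀ x, 0 ≤ ν0 x) (hν0 : ∑' x, ν0 x = 1)
    (π π' : X → A → ℝ)
    (hπnn : ∀ x a, 0 ≤ π x a) (hπ : ∀ x, ∑ a, π x a = 1)
    (hπ'nn : ∀ x a, 0 ≤ π' x a) (hπ' : ∀ x, ∑ a, π' x a = 1)
    (μ μ' : X → A → ℝ) (ν ν' : X → ℝ)
    (hνnn : ∀ x, 0 ≤ ν x) (hν'nn : ∀ x, 0 ≤ ν' x)
    -- the occupancy measures factorize as state occupancy times policy
    (hμ : ∀ x a, μ x a = ν x * π x a) (hμ' : ∀ x a, μ' x a = ν' x * π' x a)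
    -- flow constraints E^T μ = γ P^T μ + (1-γ) ν0
    (hflow : ∀ x, ν x = γ * ∑' x' : X, ∑ a', P x' a' x * μ x' a' + (1 - γ) * ν0 x)
    (hflow' : ∀ x, ν' x = γ * ∑' x' : X, ∑ a', P x' a' x * μ' x' a' + (1 - γ) * ν0 x)
    (hνsum : Summable ν) (hν'sum : Summable ν')
    -- absolute continuity (otherwise the KL divergences are infinite by convention)
    (hac : ∀ x a, π' x a = 0 → π x a = 0)
    (hacμ : ∀ x a, μ' x a = 0 → μ x a = 0)
    -- absolute convergence of the relevant series
    (hsum1 : Summable fun x => ∑ a, |μ x a * Real.log (μ x a / μ' x a)|)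
    (hsum2 : Summable fun x => ν x * ∑ a, |π x a * Real.log (π x a / π' x a)|) :
    klPair μ μ' ≤ (1 / (1 - γ)) * ∑' x : X, ν x * klFin (π x) (π' x) :=
  occupancy_kl_le_general γ hγ P hPnn hP ν0 hν0nn π π' hπnn hπ hπ'nn hπ' μ μ' ν ν' hνnn hν'nn hμ hμ'
    hflow hflow' hνsum hν'sum hacμ hsum1 hsum2
end

section
/- Consider an MDP M with discount γ, ascension function p⁺: X×A → [0,1], and the optimistically augmented MDP M⁺ with an absorbing 'heaven' state x⁺ reached from (x,a) with probability p⁺(x,a) (otherwise following the original kernel). Then for any policy π and any non-heaven state-action pair (x,a), the discounted occupancy measure in M⁺ satisfies μ⁺(π, x, a) ≤ μ(π, x, a). -/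
/-!
Couple the two processes: as long as the augmented chain has not ascended to `x⁺` it moves
like the original one, and once in `x⁺` it never returns. Hence, at every time `τ`, the
probability of being at a non-heaven pair `(x, a)` in `M⁺` is at most the corresponding
probability in `M`; summing with the weights `(1 - γ) γ^τ` gives the claim.
-/

open scoped ENNReal

noncomputable def saProb {X A : Type*} [Fintype A]
    (P : X → A → X → ℝ≥0∞) (π : X → A → ℝ≥0∞) (ν0 : X → ℝ≥0∞) : ℕ → X → A → ℝ≥0∞
  | 0 => fun x a => ν0 x * π x a
  | (τ + 1) => fun x a => (∑' x' : X, ∑ a' : A, saProb P π ν0 τ x' a' * P x' a' x) * π x a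

noncomputable def occ {X A : Type*} [Fintype A]
    (P : X → A → X → ℝ≥0∞) (π : X → A → ℝ≥0∞) (ν0 : X → ℝ≥0∞) (γ : ℝ≥0∞)
    (x : X) (a : A) : ℝ≥0∞ :=
  (1 - γ) * ∑' τ : ℕ, γ ^ τ * saProb P π ν0 τ x a

/-- Augmented transition kernel on `Option X`, where `none` is the absorbing heaven
state `x⁺`, reached from `(x, a)` with probability `pplus x a`. -/
noncomputable def Pplus {X A : Type*} (P : X → A → X → ℝ≥0∞) (pplus : X → A → ℝ≥0∞) :
    Option X → A → Option X → ℝ≥0∞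
  | some x, a, some x' => (1 - pplus x a) * P x a x'
  | some x, a, none => pplus x a
  | none, _, none => 1
  | none, _, some _ => 0

theorem tsum_option_eq_of_none_eq_zero {X M : Type*} [AddCommMonoid M] [TopologicalSpace M]
    {f : Option X → M} (h : f none = 0) : ∑' o, f o = ∑' x, f (some x) := by
  refine ((Option.some_injective X).tsum_eq fun o ho => ?_).symm
  cases o with
  | none => exact absurd h ho
  | some x => exact ⟨x, rfl⟩

theorem saProb_some_le {X A : Type*} [Fintype A] {Q : Option X → A → Option X → ℝ≥0∞}
    {P : X → A → X → ℝ≥0∞} {π : Option X → A → ℝ≥0∞} {ν : Option X → ℝ≥0∞} {ν0 : X → ℝ≥0∞}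
    (hQ : ∀ x a x', Q (some x) a (some x') ≤ P x a x') (habs : ∀ a x, Q none a (some x) = 0)
    (hν : ∀ x, ν (some x) ≤ ν0 x) (τ : ℕ) (x : X) (a : A) :
    saProb Q π ν τ (some x) a ≤ saProb P (fun x a => π (some x) a) ν0 τ x a := by
  induction τ generalizing x a with
  | zero => exact mul_le_mul_left (hν x) _
  | succ τ ih =>
    simp only [saProb]
    rw [tsum_option_eq_of_none_eq_zero (by simp [habs])]
    gcongr with x' a'
    · exact ih x' a'
    · exact hQ x' a' x

theorem Pplus_some_some_le {X A : Type*} (P : X → A → X → ℝ≥0∞) (pplus : X → A → ℝ≥0∞)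
    (x : X) (a : A) (x' : X) : Pplus P pplus (some x) a (some x') ≤ P x a x' :=
  mul_le_of_le_one_left' tsub_le_self

theorem Pplus_none_some {X A : Type*} (P : X → A → X → ℝ≥0∞) (pplus : X → A → ℝ≥0∞)
    (a : A) (x : X) : Pplus P pplus none a (some x) = 0 :=
  rfl

theorem occ_le_occ_of_saProb_le {X Y A : Type*} [Fintype A]
    {Q : Y → A → Y → ℝ≥0∞} {σ : Y → A → ℝ≥0∞} {μ0 : Y → ℝ≥0∞}
    {P : X → A → X → ℝ≥0∞} {π : X → A → ℝ≥0∞} {ν0 : X → ℝ≥0∞} (γ : ℝ≥0∞) {y : Y} {x : X}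
    {a : A} (h : ∀ τ, saProb Q σ μ0 τ y a ≤ saProb P π ν0 τ x a) :
    occ Q σ μ0 γ y a ≤ occ P π ν0 γ x a := by
  unfold occ
  gcongr with τ
  exact h τ

theorem augmented_occ_le_general {X A : Type*} [Fintype A]
    (P : X → A → X → ℝ≥0∞) (pplus : X → A → ℝ≥0∞) (π : Option X → A → ℝ≥0∞)
    (ν0 : X → ℝ≥0∞) (γ : ℝ≥0∞) :
    ∀ (x : X) (a : A),
      occ (Pplus P pplus) π (fun o => o.elim 0 ν0) γ (some x) a ≤
        occ P (fun x a => π (some x) a) ν0 γ x a :=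
  fun _ _ => occ_le_occ_of_saProb_le γ
    (saProb_some_le (Pplus_some_some_le P pplus) (Pplus_none_some P pplus) (fun _ => le_rfl) · _ _)

/-- The occupancy measure in the optimistically augmented MDP is pointwise dominated
by the occupancy measure in the original MDP at every non-heaven state-action pair. -/
theorem augmented_occ_le {X A : Type*} [Countable X] [Fintype A]
    (P : X → A → X → ℝ≥0∞) (pplus : X → A → ℝ≥0∞) (π : Option X → A → ℝ≥0∞)
    (ν0 : X → ℝ≥0∞) (γ : ℝ≥0∞)
    (hP : ∀ x a, ∑' x', P x a x' = 1) (hpl : ∀ x a, pplus x a ≤ 1)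
    (hπ : ∀ o, ∑ a, π o a = 1) (hν0 : ∑' x, ν0 x = 1) (hγ0 : 0 < γ) (hγ : γ < 1) :
    ∀ (x : X) (a : A),
      occ (Pplus P pplus) π (fun o => o.elim 0 ν0) γ (some x) a ≤
        occ P (fun x a => π (some x) a) ν0 γ x a :=
  augmented_occ_le_general P pplus π ν0 γ
end

section
/- In the setting of optimistically augmented MDPs, for any policy π and ascension function p⁺, the model bias Δ(π) = ⟨μ⁺(π) − μ(π), r⁺⟩ satisfies 0 ≤ Δ(π) ≤ (R_max/(1−γ)) ⟨μ(π), p⁺⟩, where μ⁺(π) is the occupancy measure of π in the augmented MDP and r⁺ is the augmented reward (equal to R_max at heaven, and (1−p⁺)r + p⁺R_max elsewhere, with 0 ≤ r ≤ R_max). -/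
open scoped ENNReal NNReal

/-!
Ascending to heaven only removes mass from the original states: step by step the augmented
state-action distribution on `X × A` is dominated by the original one, so `μ⁺ ≤ μ` there. Both
occupancy measures have mass one, hence the mass `H` that `μ⁺` puts on heaven is the total mass of
`μ − μ⁺`, and `Δ = R_max H − ⟨μ − μ⁺, r⁺⟩` lies in `[0, R_max H]` because `0 ≤ r⁺ ≤ R_max`.
The flow equation of `μ⁺` at the absorbing heaven state reads `H = γ H + γ ⟨μ⁺, p⁺⟩`, so
`(1 − γ) H ≤ ⟨μ, p⁺⟩`.

All sums are taken in `ℝ≥0∞`, where they are unconditionally defined; the real statement is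
recovered with `toReal` at the very end.
-/

theorem ENNReal.tsum_option {X : Type*} (f : Option X → ℝ≥0∞) :
    ∑' o, f o = f none + ∑' x, f (some x) := by
  rw [← (Equiv.optionEquivSumPUnit.{0} X).symm.tsum_eq,
    ENNReal.summable.tsum_sum ENNReal.summable, add_comm]
  simp

section Occupancy

variable {X A : Type*} [Fintype A]

noncomputable def pairing (μ f : X → A → ℝ≥0∞) : ℝ≥0∞ :=
  ∑' x, ∑ a, μ x a * f x a

@[simp]
theorem pairing_one (μ : X → A → ℝ≥0∞) : pairing μ 1 = ∑' x, ∑ a, μ x a := by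
  simp [pairing]

@[gcongr]
theorem pairing_mono {μ μ' f f' : X → A → ℝ≥0∞} (hμ : μ ≤ μ') (hf : f ≤ f') :
    pairing μ f ≤ pairing μ' f' :=
  ENNReal.tsum_le_tsum fun x => Finset.sum_le_sum fun a _ => mul_le_mul' (hμ x a) (hf x a)

theorem pairing_add_pairing_sub {μ ν : X → A → ℝ≥0∞} (hνμ : ν ≤ μ)
    (f : X → A → ℝ≥0∞) : pairing ν f + pairing (μ - ν) f = pairing μ f := by
  rw [pairing, pairing, pairing, ← ENNReal.tsum_add]
  refine tsum_congr fun x => ?_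
  rw [← Finset.sum_add_distrib]
  refine Finset.sum_congr rfl fun a _ => ?_
  rw [Pi.sub_apply, Pi.sub_apply, ← add_mul, add_tsub_cancel_of_le (hνμ x a)]

theorem pairing_const (μ : X → A → ℝ≥0∞) (R : ℝ≥0∞) :
    pairing μ (fun _ _ => R) = R * pairing μ 1 := by
  simp only [pairing, Pi.one_apply, mul_one, mul_comm R, ← ENNReal.tsum_mul_right, Finset.sum_mul]

theorem pairing_ne_top {μ f : X → A → ℝ≥0∞} {R : ℝ≥0∞} (hμ : pairing μ 1 ≠ ⊤)
    (hf : f ≤ fun _ _ => R) (hR : R ≠ ⊤) : pairing μ f ≠ ⊤ :=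
  ne_top_of_le_ne_top (by rw [pairing_const]; exact ENNReal.mul_ne_top hR hμ)
    (pairing_mono le_rfl hf)

theorem pairing_le_pairing_add_mul {μ ν f : X → A → ℝ≥0∞} {R : ℝ≥0∞}
    (hνμ : ν ≤ μ) (hν : pairing ν 1 ≠ ⊤) (hf : f ≤ fun _ _ => R) :
    pairing μ f ≤ pairing ν f + R * (pairing μ 1 - pairing ν 1) := by
  have hmass : pairing (μ - ν) 1 = pairing μ 1 - pairing ν 1 :=
    ENNReal.eq_sub_of_add_eq hν ((add_comm _ _).trans (pairing_add_pairing_sub hνμ 1))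
  calc pairing μ f = pairing ν f + pairing (μ - ν) f := (pairing_add_pairing_sub hνμ f).symm
    _ ≤ pairing ν f + pairing (μ - ν) (fun _ _ => R) := by gcongr
    _ = pairing ν f + R * (pairing μ 1 - pairing ν 1) := by rw [pairing_const, hmass]

theorem toReal_pairing {μ f : X → A → ℝ≥0∞} (h : pairing μ f ≠ ⊤) :
    (pairing μ f).toReal = ∑' x, ∑ a, (μ x a).toReal * (f x a).toReal := by
  have hx := ENNReal.ne_top_of_tsum_ne_top h
  rw [pairing, ENNReal.tsum_toReal_eq hx]
  refine tsum_congr fun x => ?_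
  rw [ENNReal.toReal_sum fun a _ => (ENNReal.sum_ne_top.mp (hx x)) a (Finset.mem_univ a)]
  simp only [ENNReal.toReal_mul]

variable (P : X → A → X → ℝ≥0∞) (π : X → A → ℝ≥0∞) (ν0 : X → ℝ≥0∞)

theorem sum_saProb_zero {y : X} (hπ : ∑ a, π y a = 1) : ∑ a, saProb P π ν0 0 y a = ν0 y := by
  simp only [saProb, ← Finset.mul_sum, hπ, mul_one]

theorem sum_saProb_succ (τ : ℕ) {y : X} (hπ : ∑ a, π y a = 1) :
    ∑ a, saProb P π ν0 (τ + 1) y a = pairing (saProb P π ν0 τ) fun x a => P x a y := by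
  simp only [saProb, ← Finset.mul_sum, hπ, mul_one, pairing]

theorem tsum_sum_saProb (hP : ∀ x a, ∑' y, P x a y = 1) (hπ : ∀ x, ∑ a, π x a = 1)
    (hν0 : ∑' x, ν0 x = 1) (τ : ℕ) : ∑' x, ∑ a, saProb P π ν0 τ x a = 1 := by
  induction τ with
  | zero => rw [tsum_congr fun y => sum_saProb_zero P π ν0 (hπ y), hν0]
  | succ τ ih =>
    rw [tsum_congr fun y => sum_saProb_succ P π ν0 τ (hπ y), ← ih]
    simp only [pairing]
    rw [ENNReal.tsum_comm]
    refine tsum_congr fun x => ?_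
    rw [Summable.tsum_finsetSum fun _ _ => ENNReal.summable]
    simp only [ENNReal.tsum_mul_left, hP, mul_one]

theorem pairing_occ (c : ℝ≥0∞) (f : X → A → ℝ≥0∞) :
    pairing (occ P π ν0 c) f = (1 - c) * ∑' τ : ℕ, c ^ τ * pairing (saProb P π ν0 τ) f := by
  simp only [pairing, occ, mul_assoc, ← ENNReal.tsum_mul_right, ← ENNReal.tsum_mul_left,
    Finset.mul_sum]
  rw [ENNReal.tsum_comm]
  refine tsum_congr fun x => ?_
  rw [← Summable.tsum_finsetSum fun _ _ => ENNReal.summable]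

theorem pairing_occ_one (hP : ∀ x a, ∑' y, P x a y = 1) (hπ : ∀ x, ∑ a, π x a = 1)
    (hν0 : ∑' x, ν0 x = 1) {c : ℝ≥0∞} (hc : c < 1) : pairing (occ P π ν0 c) 1 = 1 := by
  rw [pairing_occ]
  simp only [pairing_one, tsum_sum_saProb P π ν0 hP hπ hν0, mul_one, ENNReal.tsum_geometric]
  rw [ENNReal.mul_inv_cancel (tsub_pos_of_lt hc).ne' (ENNReal.sub_ne_top ENNReal.one_ne_top)]

theorem sum_occ_flow (c : ℝ≥0∞) {y : X} (hπ : ∑ a, π y a = 1) :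
    ∑ a, occ P π ν0 c y a = (1 - c) * ν0 y + c * pairing (occ P π ν0 c) fun x a => P x a y := by
  have hshift : ∑' τ : ℕ, c ^ τ * ∑ a, saProb P π ν0 τ y a
      = ν0 y + c * ∑' τ : ℕ, c ^ τ * pairing (saProb P π ν0 τ) fun x a => P x a y := by
    rw [tsum_eq_zero_add' ENNReal.summable, pow_zero, one_mul, sum_saProb_zero P π ν0 hπ,
      ← ENNReal.tsum_mul_left]
    congr 1
    refine tsum_congr fun τ => ?_
    rw [sum_saProb_succ P π ν0 τ hπ, pow_succ']
    ring
  simp only [occ, ← Finset.mul_sum]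
  rw [← Summable.tsum_finsetSum fun _ _ => ENNReal.summable]
  simp only [← Finset.mul_sum]
  rw [hshift, pairing_occ]
  ring

end Occupancy

section Augmented

variable {X A : Type*} (P : X → A → X → ℝ≥0∞) (pplus : X → A → ℝ≥0∞)

theorem tsum_Pplus (hP : ∀ x a, ∑' y, P x a y = 1) (hpl : ∀ x a, pplus x a ≤ 1)
    (o : Option X) (a : A) : ∑' o', Pplus P pplus o a o' = 1 := by
  cases o with
  | none => simp [ENNReal.tsum_option, Pplus]
  | some x =>
    simp only [ENNReal.tsum_option, Pplus, ENNReal.tsum_mul_left, hP, mul_one]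
    exact add_tsub_cancel_of_le (hpl x a)

variable [Fintype A] (π : Option X → A → ℝ≥0∞) (ν0 : X → ℝ≥0∞)

theorem saProb_Pplus_some_le (τ : ℕ) :
    (fun x a => saProb (Pplus P pplus) π (fun o => o.elim 0 ν0) τ (some x) a)
      ≤ saProb P (fun x a => π (some x) a) ν0 τ := by
  induction τ with
  | zero => intro x a; simp [saProb]
  | succ τ ih =>
    intro x a
    simp only [saProb, ENNReal.tsum_option, Pplus, mul_zero, Finset.sum_const_zero, zero_add]
    gcongr with x' a'
    · exact ih x' a'
    · exact mul_le_of_le_one_left' tsub_le_self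

theorem occ_Pplus_some_le (c : ℝ≥0∞) :
    (fun x a => occ (Pplus P pplus) π (fun o => o.elim 0 ν0) c (some x) a)
      ≤ occ P (fun x a => π (some x) a) ν0 c := by
  intro x a
  simp only [occ]
  gcongr with τ
  exact saProb_Pplus_some_le P pplus π ν0 τ x a

theorem sum_occ_Pplus_none_add_pairing (hP : ∀ x a, ∑' y, P x a y = 1)
    (hpl : ∀ x a, pplus x a ≤ 1) (hπ : ∀ o, ∑ a, π o a = 1) (hν0 : ∑' x, ν0 x = 1)
    {c : ℝ≥0∞} (hc : c < 1) :
    ∑ a, occ (Pplus P pplus) π (fun o => o.elim 0 ν0) c none a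
      + pairing (fun x a => occ (Pplus P pplus) π (fun o => o.elim 0 ν0) c (some x) a) 1
      = 1 := by
  rw [pairing_one, ← ENNReal.tsum_option fun o => ∑ a, _, ← pairing_one]
  exact pairing_occ_one _ _ _ (tsum_Pplus P pplus hP hpl) hπ
    (by simpa [ENNReal.tsum_option] using hν0) hc

theorem sum_occ_Pplus_none_ne_top (hP : ∀ x a, ∑' y, P x a y = 1)
    (hpl : ∀ x a, pplus x a ≤ 1) (hπ : ∀ o, ∑ a, π o a = 1) (hν0 : ∑' x, ν0 x = 1)
    {c : ℝ≥0∞} (hc : c < 1) :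
    ∑ a, occ (Pplus P pplus) π (fun o => o.elim 0 ν0) c none a ≠ ⊤ :=
  ne_top_of_le_ne_top ENNReal.one_ne_top
    (le_self_add.trans (sum_occ_Pplus_none_add_pairing P pplus π ν0 hP hpl hπ hν0 hc).le)

theorem one_sub_mul_sum_occ_Pplus_none_le (hP : ∀ x a, ∑' y, P x a y = 1)
    (hpl : ∀ x a, pplus x a ≤ 1) (hπ : ∀ o, ∑ a, π o a = 1) (hν0 : ∑' x, ν0 x = 1)
    {c : ℝ≥0∞} (hc : c < 1) :
    (1 - c) * ∑ a, occ (Pplus P pplus) π (fun o => o.elim 0 ν0) c none a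
      ≤ pairing (occ P (fun x a => π (some x) a) ν0 c) pplus := by
  set μ := occ (Pplus P pplus) π (fun o => o.elim 0 ν0) c
  set H := ∑ a, μ none a
  set K := pairing (fun x a => μ (some x) a) pplus
  have hflow : H = c * H + c * K := by
    have h := sum_occ_flow (Pplus P pplus) π (fun o => o.elim 0 ν0) c (hπ none)
    simp only [pairing, ENNReal.tsum_option, Pplus, mul_one, Option.elim_none, mul_zero,
      zero_add] at h
    exact h.trans (mul_add _ _ _)
  have hH : H ≠ ⊤ := sum_occ_Pplus_none_ne_top P pplus π ν0 hP hpl hπ hν0 hc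
  calc (1 - c) * H = c * K := by
        rw [ENNReal.sub_mul fun _ _ => hH, one_mul]
        nth_rewrite 1 [hflow]
        exact ENNReal.add_sub_cancel_left (ENNReal.mul_ne_top (hc.trans ENNReal.one_lt_top).ne hH)
    _ ≤ K := mul_le_of_le_one_left' hc.le
    _ ≤ pairing (occ P (fun x a => π (some x) a) ν0 c) pplus :=
        pairing_mono (occ_Pplus_some_le P pplus π ν0 c) le_rfl

theorem pairing_occ_le_pairing_occ_Pplus_add (hP : ∀ x a, ∑' y, P x a y = 1)
    (hpl : ∀ x a, pplus x a ≤ 1) (hπ : ∀ o, ∑ a, π o a = 1) (hν0 : ∑' x, ν0 x = 1)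
    {c : ℝ≥0∞} (hc : c < 1) {f : X → A → ℝ≥0∞} {R : ℝ≥0∞} (hf : f ≤ fun _ _ => R) :
    pairing (occ P (fun x a => π (some x) a) ν0 c) f
      ≤ pairing (fun x a => occ (Pplus P pplus) π (fun o => o.elim 0 ν0) c (some x) a) f
        + R * ∑ a, occ (Pplus P pplus) π (fun o => o.elim 0 ν0) c none a := by
  have hsplit := sum_occ_Pplus_none_add_pairing P pplus π ν0 hP hpl hπ hν0 hc
  have hfin := ne_top_of_le_ne_top ENNReal.one_ne_top (le_add_self.trans hsplit.le)
  have h := pairing_le_pairing_add_mul (occ_Pplus_some_le P pplus π ν0 c) hfin hf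
  rwa [pairing_occ_one P _ ν0 hP (fun x => hπ (some x)) hν0 hc,
    ← ENNReal.eq_sub_of_add_eq hfin hsplit] at h

end Augmented

theorem one_sub_mul_add_mul_mem_Icc {p r R : ℝ} (hp : p ∈ Set.Icc 0 1) (hr : r ∈ Set.Icc 0 R)
    (hR : 0 ≤ R) : (1 - p) * r + p * R ∈ Set.Icc 0 R := by
  simpa only [smul_eq_mul] using
    convex_Icc 0 R hr ⟨hR, le_rfl⟩ (sub_nonneg.2 hp.2) hp.1 (sub_add_cancel 1 p)

theorem toReal_add_mul_sub_mem_Icc {A B H D c R : ℝ≥0∞} (hB : B ≠ ⊤) (hH : H ≠ ⊤) (hD : D ≠ ⊤)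
    (hR : R ≠ ⊤) (hc : c < 1) (hAB : A ≤ B) (hBA : B ≤ A + R * H) (hHD : (1 - c) * H ≤ D) :
    A.toReal + H.toReal * R.toReal - B.toReal
      ∈ Set.Icc 0 (R.toReal / (1 - c.toReal) * D.toReal) := by
  have hA : A ≠ ⊤ := ne_top_of_le_ne_top hB hAB
  have hAB' : A.toReal ≤ B.toReal := ENNReal.toReal_mono hB hAB
  have hBA' : B.toReal ≤ A.toReal + R.toReal * H.toReal := by
    have h := ENNReal.toReal_mono (by finiteness) hBA
    rwa [ENNReal.toReal_add hA (by finiteness), ENNReal.toReal_mul] at h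
  have hHD' : (1 - c.toReal) * H.toReal ≤ D.toReal := by
    have h := ENNReal.toReal_mono hD hHD
    rwa [ENNReal.toReal_mul, ENNReal.toReal_sub_of_le hc.le ENNReal.one_ne_top,
      ENNReal.toReal_one] at h
  have hc' : 0 < 1 - c.toReal := by
    have := ENNReal.toReal_strict_mono ENNReal.one_ne_top hc
    rw [ENNReal.toReal_one] at this
    linarith
  refine ⟨by linarith, ?_⟩
  calc A.toReal + H.toReal * R.toReal - B.toReal ≤ R.toReal * H.toReal := by linarith
    _ ≤ R.toReal * (D.toReal / (1 - c.toReal)) := by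
        gcongr
        rwa [le_div_iff₀ hc', mul_comm]
    _ = R.toReal / (1 - c.toReal) * D.toReal := by ring

theorem model_bias_bounds_general {X A : Type*} [Fintype A]
    (P : X → A → X → ℝ≥0∞) (pplus : X → A → ℝ≥0∞) (π : Option X → A → ℝ≥0∞)
    (ν0 : X → ℝ≥0∞) (γ : ℝ≥0)
    (hP : ∀ x a, ∑' x', P x a x' = 1) (hpl : ∀ x a, pplus x a ≤ 1)
    (hπ : ∀ o, ∑ a, π o a = 1) (hν0 : ∑' x, ν0 x = 1) (hγ : γ < 1)
    (r : X → A → ℝ) (Rmax : ℝ) (hRmax : 0 < Rmax)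
    (hr : ∀ x a, 0 ≤ r x a ∧ r x a ≤ Rmax)
    -- the augmented mean reward: `(1 − p⁺) r + p⁺ R_max` outside heaven
    (rplus : X → A → ℝ)
    (hrplus : ∀ x a, rplus x a =
      (1 - (pplus x a).toReal) * r x a + (pplus x a).toReal * Rmax)
    -- occupancy measures of `π` in the augmented and in the original MDP
    (μplus : Option X → A → ℝ≥0∞) (μ : X → A → ℝ≥0∞)
    (hμplus : ∀ o a, μplus o a = occ (Pplus P pplus) π (fun o => o.elim 0 ν0) (γ : ℝ≥0∞) o a)
    (hμ : ∀ x a, μ x a = occ P (fun x a => π (some x) a) ν0 (γ : ℝ≥0∞) x a)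
    -- the model bias `Δ(π) = ⟨μ⁺(π) − μ(π), r⁺⟩`, with `r⁺ = R_max` at heaven
    (Δ : ℝ)
    (hΔ : Δ = ((∑' x : X, ∑ a, (μplus (some x) a).toReal * rplus x a)
          + ∑ a, (μplus none a).toReal * Rmax)
          - ∑' x : X, ∑ a, (μ x a).toReal * rplus x a) :
    0 ≤ Δ ∧ Δ ≤ Rmax / (1 - (γ : ℝ)) * ∑' x : X, ∑ a, (μ x a).toReal * (pplus x a).toReal := by
  obtain rfl := funext₂ hμplus
  obtain rfl := funext₂ hμ
  subst hΔ
  have hc : (γ : ℝ≥0∞) < 1 := by exact_mod_cast hγ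
  have hrplus_mem : ∀ x a, rplus x a ∈ Set.Icc 0 Rmax := fun x a => hrplus x a ▸
    one_sub_mul_add_mul_mem_Icc ⟨ENNReal.toReal_nonneg, ENNReal.toReal_le_of_le_ofReal
      zero_le_one (by simpa using hpl x a)⟩ (hr x a) hRmax.le
  set E : X → A → ℝ≥0∞ := fun x a => ENNReal.ofReal (rplus x a)
  have hE : E ≤ fun _ _ => ENNReal.ofReal Rmax :=
    fun x a => ENNReal.ofReal_le_ofReal (hrplus_mem x a).2
  have hmass : pairing (occ P (fun x a => π (some x) a) ν0 γ) 1 ≠ ⊤ := by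
    simp [pairing_occ_one P _ ν0 hP (fun x => hπ (some x)) hν0 hc]
  have hB := pairing_ne_top hmass hE ENNReal.ofReal_ne_top
  have hD := pairing_ne_top hmass (show pplus ≤ fun _ _ => 1 from hpl) ENNReal.one_ne_top
  have hAB := pairing_mono (occ_Pplus_some_le P pplus π ν0 γ) (le_refl E)
  have hA := ne_top_of_le_ne_top hB hAB
  have hH := sum_occ_Pplus_none_ne_top P pplus π ν0 hP hpl hπ hν0 hc
  have key := toReal_add_mul_sub_mem_Icc hB hH hD ENNReal.ofReal_ne_top hc hAB
    (pairing_occ_le_pairing_occ_Pplus_add P pplus π ν0 hP hpl hπ hν0 hc hE)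
    (one_sub_mul_sum_occ_Pplus_none_le P pplus π ν0 hP hpl hπ hν0 hc)
  rw [toReal_pairing hA, toReal_pairing hB, toReal_pairing hD,
    ENNReal.toReal_sum fun a _ => ENNReal.sum_ne_top.mp hH a (Finset.mem_univ a),
    Finset.sum_mul] at key
  simpa [E, ENNReal.toReal_ofReal, (hrplus_mem _ _).1, hRmax.le] using key

/-- Model-bias bounds: `0 ≤ ⟨μ⁺(π) − μ(π), r⁺⟩ ≤ (R_max/(1−γ)) ⟨μ(π), p⁺⟩`. -/
theorem model_bias_bounds {X A : Type*} [Countable X] [Fintype A]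
    (P : X → A → X → ℝ≥0∞) (pplus : X → A → ℝ≥0∞) (π : Option X → A → ℝ≥0∞)
    (ν0 : X → ℝ≥0∞) (γ : ℝ≥0)
    (hP : ∀ x a, ∑' x', P x a x' = 1) (hpl : ∀ x a, pplus x a ≤ 1)
    (hπ : ∀ o, ∑ a, π o a = 1) (hν0 : ∑' x, ν0 x = 1) (hγ0 : 0 < γ) (hγ : γ < 1)
    (r : X → A → ℝ) (Rmax : ℝ) (hRmax : 0 < Rmax)
    (hr : ∀ x a, 0 ≤ r x a ∧ r x a ≤ Rmax)
    -- the augmented mean reward: `(1 − p⁺) r + p⁺ R_max` outside heaven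
    (rplus : X → A → ℝ)
    (hrplus : ∀ x a, rplus x a =
      (1 - (pplus x a).toReal) * r x a + (pplus x a).toReal * Rmax)
    -- occupancy measures of `π` in the augmented and in the original MDP
    (μplus : Option X → A → ℝ≥0∞) (μ : X → A → ℝ≥0∞)
    (hμplus : ∀ o a, μplus o a = occ (Pplus P pplus) π (fun o => o.elim 0 ν0) (γ : ℝ≥0∞) o a)
    (hμ : ∀ x a, μ x a = occ P (fun x a => π (some x) a) ν0 (γ : ℝ≥0∞) x a)
    -- the model bias `Δ(π) = ⟨μ⁺(π) − μ(π), r⁺⟩`, with `r⁺ = R_max` at heaven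
    (Δ : ℝ)
    (hΔ : Δ = ((∑' x : X, ∑ a, (μplus (some x) a).toReal * rplus x a)
          + ∑ a, (μplus none a).toReal * Rmax)
          - ∑' x : X, ∑ a, (μ x a).toReal * rplus x a) :
    0 ≤ Δ ∧ Δ ≤ Rmax / (1 - (γ : ℝ)) * ∑' x : X, ∑ a, (μ x a).toReal * (pplus x a).toReal :=
  model_bias_bounds_general P pplus π ν0 γ hP hpl hπ hν0 hγ r Rmax hRmax hr rplus hrplus μplus μ
    hμplus hμ Δ hΔ
end

section
/- Reward bias bound: for any two policies π* and π_k and any ascension function p⁺ with values in [0,1], ⟨μ(π*) − μ(π_k), r − r⁺⟩ ≤ R_max ⟨μ(π_k), p⁺⟩, where r takes values in [0, R_max] and r⁺ = (1 − p⁺)⊙r + p⁺·R_max. -/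
/-! Pointwise, `r − r⁺ = −p⁺ (R_max − r) ≤ 0`, so the `μ(π*)` part of the pairing is nonpositive
while the `μ(π_k)` part is at most `R_max μ(π_k) p⁺`. Since `|r − r⁺| ≤ R_max`, all series involved
are dominated by `R_max (μ(π*) + μ(π_k))`, and the pointwise bound sums up. -/

lemma sub_ascended_reward (R r p : ℝ) : r - ((1 - p) * r + p * R) = -(p * (R - r)) := by
  ring

section AscensionGap

variable {R r p : ℝ}

lemma ascension_gap_nonneg (hrR : r ≤ R) (hp : 0 ≤ p) : 0 ≤ p * (R - r) :=
  mul_nonneg hp (sub_nonneg.mpr hrR)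

lemma ascension_gap_le_mul (hr : 0 ≤ r) (hp : 0 ≤ p) : p * (R - r) ≤ R * p := by
  nlinarith

lemma ascension_gap_le (hr : 0 ≤ r) (hrR : r ≤ R) (hp1 : p ≤ 1) :
    p * (R - r) ≤ R := by
  nlinarith

end AscensionGap

section WeightedGap

variable {a b c d : ℝ}

lemma sub_mul_neg_le (ha : 0 ≤ a) (hb : 0 ≤ b) (hd : 0 ≤ d) (hdc : d ≤ c) :
    (a - b) * -d ≤ b * c :=
  calc (a - b) * -d = b * d - a * d := by ring
    _ ≤ b * d := sub_le_self _ (mul_nonneg ha hd)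
    _ ≤ b * c := mul_le_mul_of_nonneg_left hdc hb

lemma norm_sub_mul_neg_le (ha : 0 ≤ a) (hb : 0 ≤ b) (hd : 0 ≤ d) (hdc : d ≤ c) :
    ‖(a - b) * -d‖ ≤ c * (a + b) := by
  have hab : |a - b| ≤ a + b := abs_sub_le_iff.2 ⟨by linarith, by linarith⟩
  rw [Real.norm_eq_abs, abs_mul, abs_neg, abs_of_nonneg hd, mul_comm c]
  exact mul_le_mul hab hdc hd (add_nonneg ha hb)

end WeightedGap

theorem reward_bias_bound_general {Z : Type*}
    (Rmax : ℝ)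
    (μstar μk : Z → ℝ)
    (hμstar_nn : ∀ z, 0 ≤ μstar z) (hμk_nn : ∀ z, 0 ≤ μk z)
    (hμstar_sum : Summable μstar) (hμk_sum : Summable μk)
    (r p : Z → ℝ)
    (hr : ∀ z, 0 ≤ r z ∧ r z ≤ Rmax) (hp : ∀ z, 0 ≤ p z ∧ p z ≤ 1)
    (rplus : Z → ℝ) (hrplus : ∀ z, rplus z = (1 - p z) * r z + p z * Rmax) :
    ∑' z, (μstar z - μk z) * (r z - rplus z) ≤ Rmax * ∑' z, μk z * p z := by
  have hgap (z : Z) : r z - rplus z = -(p z * (Rmax - r z)) := by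
    rw [hrplus, sub_ascended_reward]
  have hgap_nn (z : Z) := ascension_gap_nonneg (hr z).2 (hp z).1
  have hle (z : Z) : (μstar z - μk z) * (r z - rplus z) ≤ Rmax * (μk z * p z) := by
    rw [hgap, mul_left_comm]
    exact sub_mul_neg_le (hμstar_nn z) (hμk_nn z) (hgap_nn z)
      (ascension_gap_le_mul (hr z).1 (hp z).1)
  have hnorm (z : Z) : ‖(μstar z - μk z) * (r z - rplus z)‖ ≤ Rmax * (μstar z + μk z) := by
    rw [hgap]
    exact norm_sub_mul_neg_le (hμstar_nn z) (hμk_nn z) (hgap_nn z)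
      (ascension_gap_le (hr z).1 (hr z).2 (hp z).2)
  have hsum : Summable fun z => μk z * p z :=
    hμk_sum.of_nonneg_of_le (fun z => mul_nonneg (hμk_nn z) (hp z).1)
      fun z => mul_le_of_le_one_right (hμk_nn z) (hp z).2
  calc ∑' z, (μstar z - μk z) * (r z - rplus z)
      ≤ ∑' z, Rmax * (μk z * p z) :=
        Summable.tsum_le_tsum hle (((hμstar_sum.add hμk_sum).mul_left Rmax).of_norm_bounded hnorm)
          (hsum.mul_left Rmax)
    _ = Rmax * ∑' z, μk z * p z := tsum_mul_left

/-- Reward-bias bound: `⟨μ(π*) − μ(π_k), r − r⁺⟩ ≤ R_max ⟨μ(π_k), p⁺⟩`. -/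
theorem reward_bias_bound {Z : Type*} [Countable Z]
    (Rmax : ℝ) (hRmax : 0 ≤ Rmax)
    (μstar μk : Z → ℝ)
    (hμstar_nn : ∀ z, 0 ≤ μstar z) (hμk_nn : ∀ z, 0 ≤ μk z)
    (hμstar_sum : Summable μstar) (hμk_sum : Summable μk)
    (hμstar1 : ∑' z, μstar z = 1) (hμk1 : ∑' z, μk z = 1)
    (r p : Z → ℝ)
    (hr : ∀ z, 0 ≤ r z ∧ r z ≤ Rmax) (hp : ∀ z, 0 ≤ p z ∧ p z ≤ 1)
    (rplus : Z → ℝ) (hrplus : ∀ z, rplus z = (1 - p z) * r z + p z * Rmax) :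
    ∑' z, (μstar z - μk z) * (r z - rplus z) ≤ Rmax * ∑' z, μk z * p z :=
  reward_bias_bound_general Rmax μstar μk hμstar_nn hμk_nn hμstar_sum hμk_sum r p hr hp rplus hrplus
end

section
/- In the same two-state MDP with δ₀ = δ₁ = (1−γ)/γ and γ ≥ 1/2, for the expert policy π_E that always plays a* one has Q^{π_E}(x₀, a*) − Q^{π_E}(x₀, a) ≥ γε/(3(1−γ)) for every action a ≠ a*, where rewards are r(x₀, ·) = 1, r(x₁, ·) = 0. -/
/-! Subtracting the two Bellman equations gives `(1 - γ (p₀ - p₁)) (V₀ - V₁) = 1`, where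
`p₀ = 1 - δ₀ + ε` and `p₁ = δ₁` are the probabilities of moving to `x₀`; since
`γ δ₀ = γ δ₁ = 1 - γ`, the factor is `3 (1 - γ) - γ ε`. Deviating from `a⋆` in `x₀` shifts
mass `ε` from `x₀` to `x₁`, so the Q-gap is `γ ε (V₀ - V₁) = γ ε / (3 (1 - γ) - γ ε)`, and
shrinking a positive denominator only increases `x / (c - x)` over `x / c`. -/

theorem two_state_value_sub_mul {γ p q r₀ r₁ V₀ V₁ : ℝ}
    (hV₀ : V₀ = r₀ + γ * (p * V₀ + (1 - p) * V₁))
    (hV₁ : V₁ = r₁ + γ * (q * V₀ + (1 - q) * V₁)) :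
    (1 - γ * (p - q)) * (V₀ - V₁) = r₀ - r₁ := by
  linear_combination hV₀ - hV₁

theorem div_le_div_sub_self {x c : ℝ} (hc : 0 < c) (hxc : x < c) : x / c ≤ x / (c - x) := by
  rw [div_le_div_iff₀ hc (sub_pos.2 hxc)]
  nlinarith [sq_nonneg x]

/-- Q-value gap of the expert policy in the two-state MDP with
`δ₀ = δ₁ = (1−γ)/γ`, `γ ≥ 1/2`, rewards `r(x₀,·) = 1`, `r(x₁,·) = 0`.
The values `V0 = V^{π_E}(x₀)` and `V1 = V^{π_E}(x₁)` are characterized by the Bellman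
equations of the expert policy (which always plays `a⋆`). -/
theorem expert_Q_gap (γ ε : ℝ) (hγ : 1 / 2 ≤ γ) (hγ1 : γ < 1)
    (δ0 δ1 : ℝ) (hδ0 : δ0 = (1 - γ) / γ) (hδ1 : δ1 = (1 - γ) / γ)
    (hε : ε ∈ Set.Ioo (0 : ℝ) δ0)
    (V0 V1 : ℝ)
    (hV0 : V0 = 1 + γ * ((1 - δ0 + ε) * V0 + (δ0 - ε) * V1))
    (hV1 : V1 = 0 + γ * (δ1 * V0 + (1 - δ1) * V1))
    (Qstar Qa : ℝ)
    (hQstar : Qstar = 1 + γ * ((1 - δ0 + ε) * V0 + (δ0 - ε) * V1))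
    (hQa : Qa = 1 + γ * ((1 - δ0) * V0 + δ0 * V1)) :
    γ * ε / (3 * (1 - γ)) ≤ Qstar - Qa := by
  have hγ0 : 0 < γ := by linarith
  have hγδ0 : γ * δ0 = 1 - γ := by rw [hδ0]; field_simp
  have hγδ1 : γ * δ1 = 1 - γ := by rw [hδ1]; field_simp
  have hγε : γ * ε < 1 - γ := hγδ0 ▸ mul_lt_mul_of_pos_left hε.2 hγ0
  have hV0' : V0 = 1 + γ * ((1 - δ0 + ε) * V0 + (1 - (1 - δ0 + ε)) * V1) := by
    linear_combination hV0
  have hV : (3 * (1 - γ) - γ * ε) * (V0 - V1) = 1 := by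
    linear_combination
      two_state_value_sub_mul hV0' hV1 - (V0 - V1) * (hγδ0 + hγδ1)
  have hgap : Qstar - Qa = γ * ε / (3 * (1 - γ) - γ * ε) := by
    rw [eq_div_iff (by linarith)]
    linear_combination (3 * (1 - γ) - γ * ε) * (hQstar - hQa) + γ * ε * hV
  rw [hgap]
  exact div_le_div_sub_self (by linarith) (by linarith)
end
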